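/- arXiv:2010.01341 — 6 statements merged into one kernel-verified Lean document; each statement's English description precedes it below -/
import Mathlib

section
/- Let n ≥ 2 and β > 0. There exists a constant c > 0 such that for every x ∈ ℝⁿ \ {0} and every R > 0 with R|x| ≥ 2β, one has γ₋₁(B(x,R)) ≥ c e^{|x|²} e^{R²/4} R^{n−2} |x|^{−2} e^{R|x|/4}. -/
set_option maxHeartbeats 1000000

open MeasureTheory Real
open scoped ENNReal

/-- The inverse Gaussian measure `γ₋₁` on `ℝⁿ`, with density `π^{n/2} e^{|x|²}`
with respect to Lebesgue measure. -/
noncomputable def gammaM1 (n : ℕ) : Measure (EuclideanSpace ℝ (Fin n)) :=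
  volume.withDensity fun x => ENNReal.ofReal (Real.pi ^ ((n : ℝ) / 2) * Real.exp (‖x‖ ^ 2))

/-- For `n ≥ 2` and `β > 0` there exists `c > 0` such that for every
`x ≠ 0` and `R > 0` with `R|x| ≥ 2β`, one has
`γ₋₁(B(x,R)) ≥ c e^{|x|²} e^{R²/4} R^{n-2} |x|^{-2} e^{R|x|/4}`. -/
theorem stmt1 (n : ℕ) (hn : 2 ≤ n) (β : ℝ) (hβ : 0 < β) :
    ∃ c : ℝ, 0 < c ∧ ∀ x : EuclideanSpace ℝ (Fin n), x ≠ 0 → ∀ R : ℝ, 0 < R →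
      2 * β ≤ R * ‖x‖ →
      ENNReal.ofReal (c * Real.exp (‖x‖ ^ 2) * Real.exp (R ^ 2 / 4) * R ^ ((n : ℝ) - 2)
          * ‖x‖⁻¹ ^ 2 * Real.exp (R * ‖x‖ / 4)) ≤ gammaM1 n (Metric.ball x R) := by
  set V := (volume (Metric.ball (0 : EuclideanSpace ℝ (Fin n)) 1)).toReal with hVdef
  have hVpos : 0 < V := by
    apply ENNReal.toReal_pos
    · exact (Metric.measure_ball_pos volume 0 one_pos).ne'
    · exact (measure_ball_lt_top).ne
  have hπ : (0:ℝ) < Real.pi ^ ((n:ℝ)/2) := Real.rpow_pos_of_pos Real.pi_pos _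
  refine ⟨Real.pi ^ ((n:ℝ)/2) * V * (5:ℝ)⁻¹ ^ n * (4 * β ^ 2), by positivity, ?_⟩
  intro x hx R hR hRx
  set u := ‖x‖ with hu
  have hu0 : 0 < u := norm_pos_iff.mpr hx
  set x' : EuclideanSpace ℝ (Fin n) := (1 + 3*R/(4*u)) • x with hx'def
  have hcpos : (0:ℝ) < 1 + 3*R/(4*u) := by positivity
  have hnx' : ‖x'‖ = u + 3*R/4 := by
    rw [hx'def, norm_smul, Real.norm_eq_abs, abs_of_pos hcpos, ← hu]
    field_simp
  have hsub : Metric.ball x' (R/5) ⊆ Metric.ball x R := by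
    intro y hy
    rw [Metric.mem_ball] at hy ⊢
    have hxx : dist x' x = 3*R/4 := by
      rw [dist_eq_norm, hx'def]
      have : (1 + 3*R/(4*u)) • x - x = (3*R/(4*u)) • x := by
        rw [add_smul, one_smul, add_sub_cancel_left]
      rw [this, norm_smul, Real.norm_eq_abs, abs_of_pos (by positivity), ← hu]
      field_simp
    calc dist y x ≤ dist y x' + dist x' x := dist_triangle _ _ _
      _ < R/5 + 3*R/4 := by rw [hxx]; linarith
      _ ≤ R := by linarith
  set m : ℝ := u + 11*R/20 with hmdef
  have hm0 : 0 < m := by positivity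
  have hlow : ∀ y ∈ Metric.ball x' (R/5), m ≤ ‖y‖ := by
    intro y hy
    rw [Metric.mem_ball, dist_eq_norm] at hy
    have : ‖x'‖ - ‖x' - y‖ ≤ ‖y‖ := by
      have := norm_sub_norm_le x' y
      linarith [this]
    rw [hnx'] at this
    rw [← norm_neg (y - x'), neg_sub] at hy
    rw [hmdef]
    linarith
  -- measure lower bound
  have key : ENNReal.ofReal (Real.pi ^ ((n:ℝ)/2) * Real.exp (m^2)) * volume (Metric.ball x' (R/5))
      ≤ gammaM1 n (Metric.ball x R) := by
    rw [gammaM1, withDensity_apply _ measurableSet_ball]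
    calc ENNReal.ofReal (Real.pi ^ ((n:ℝ)/2) * Real.exp (m^2)) * volume (Metric.ball x' (R/5))
        = ∫⁻ _ in Metric.ball x' (R/5),
            ENNReal.ofReal (Real.pi ^ ((n:ℝ)/2) * Real.exp (m^2)) := by
          rw [setLIntegral_const]
      _ ≤ ∫⁻ y in Metric.ball x' (R/5),
            ENNReal.ofReal (Real.pi ^ ((n:ℝ)/2) * Real.exp (‖y‖^2)) := by
          apply setLIntegral_mono
          · exact (measurable_norm.pow_const 2).exp.const_mul _ |>.ennreal_ofReal
          · intro y hy
            apply ENNReal.ofReal_le_ofReal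
            apply mul_le_mul_of_nonneg_left _ hπ.le
            exact Real.exp_le_exp.mpr (by nlinarith [hlow y hy, hm0])
      _ ≤ ∫⁻ y in Metric.ball x R,
            ENNReal.ofReal (Real.pi ^ ((n:ℝ)/2) * Real.exp (‖y‖^2)) := by
          apply lintegral_mono_set hsub
  haveI : Nontrivial (EuclideanSpace ℝ (Fin n)) := ⟨x, 0, hx⟩
  have hvol : volume (Metric.ball x' (R/5)) = ENNReal.ofReal ((R/5)^n) *
      volume (Metric.ball (0 : EuclideanSpace ℝ (Fin n)) 1) := by
    rw [Measure.addHaar_ball _ _ (by positivity : (0:ℝ) ≤ R/5), finrank_euclideanSpace_fin]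
  refine le_trans ?_ key
  rw [hvol, ← mul_assoc, ← ENNReal.ofReal_toReal (measure_ball_lt_top).ne, ← hVdef,
    ← ENNReal.ofReal_mul (by positivity), ← ENNReal.ofReal_mul (by positivity)]
  apply ENNReal.ofReal_le_ofReal
  -- now a real inequality
  have hR2 : R ^ ((n:ℝ) - 2) = R ^ (n - 2) := by
    rw [show ((n:ℝ) - 2) = ((n - 2 : ℕ) : ℝ) by
      push_cast [Nat.cast_sub hn]; ring, Real.rpow_natCast]
  rw [hR2]
  have hRn : (R/5)^n = R^(n-2) * R^2 * (5:ℝ)⁻¹ ^ n := by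
    rw [div_pow, ← pow_add, Nat.sub_add_cancel hn]
    field_simp
    rw [← mul_pow]; norm_num
  rw [hRn]
  have hβu : 4 * β^2 ≤ R^2 * u^2 := by nlinarith
  have hexp : Real.exp (u^2) * Real.exp (R^2/4) * Real.exp (R*u/4) ≤ Real.exp (m^2) := by
    rw [← Real.exp_add, ← Real.exp_add, Real.exp_le_exp, hmdef]
    nlinarith [hu0.le, hR.le, mul_nonneg hR.le hu0.le]
  have huu : u^2 * (u^2)⁻¹ = 1 := mul_inv_cancel₀ (by positivity)
  calc Real.pi ^ ((n:ℝ)/2) * V * (5:ℝ)⁻¹ ^ n * 4 * β^2 * Real.exp (u^2) *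
      Real.exp (R^2/4) * R^(n-2) * u⁻¹^2 * Real.exp (R*u/4)
      = Real.pi ^ ((n:ℝ)/2) * V * (5:ℝ)⁻¹ ^ n * (4*β^2) * Real.exp (u^2) *
      Real.exp (R^2/4) * R^(n-2) * u⁻¹^2 * Real.exp (R*u/4) := by ring
    _ ≤ Real.pi ^ ((n:ℝ)/2) * V * (5:ℝ)⁻¹^n * (R^2*u^2) * Real.exp (u^2) *
        Real.exp (R^2/4) * R^(n-2) * u⁻¹^2 * Real.exp (R*u/4) := by
        gcongr
    _ = Real.pi ^ ((n:ℝ)/2) * (Real.exp (u^2) * Real.exp (R^2/4) * Real.exp (R*u/4)) *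
        (R^(n-2) * R^2 * (5:ℝ)⁻¹^n) * V * (u^2 * (u^2)⁻¹) := by
        rw [← inv_pow]; ring
    _ = Real.pi ^ ((n:ℝ)/2) * (Real.exp (u^2) * Real.exp (R^2/4) * Real.exp (R*u/4)) *
        (R^(n-2) * R^2 * (5:ℝ)⁻¹^n) * V := by rw [huu, mul_one]
    _ ≤ Real.pi ^ ((n:ℝ)/2) * Real.exp (m^2) * (R^(n-2) * R^2 * (5:ℝ)⁻¹^n) * V := by
        gcongr
    _ = Real.pi ^ ((n:ℝ)/2) * Real.exp (m^2) * (R^(n-2) * R^2 * (5:ℝ)⁻¹^n * V) := by ring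
end

section
/- Let n ≥ 1 and define the kernel Q(x,y) = sup_{r>0} γ₋₁(B(x,r))^{−1} χ_{N^c}(x,y) χ_{B(x,r)}(y) e^{|y|²} for x, y ∈ ℝⁿ. Then the operator 𝒬(g)(x) = ∫_{ℝⁿ} Q(x,y) g(y) dy is bounded on L¹(ℝⁿ, γ₋₁): there exists C > 0 such that for every measurable g : ℝⁿ → [0,∞], ∫_{ℝⁿ} (∫_{ℝⁿ} Q(x,y) g(y) dy) γ₋₁(x) dx ≤ C ∫_{ℝⁿ} g(y) γ₋₁(y) dy. -/
open MeasureTheory Real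
open scoped ENNReal

/-- The local region `N = {(x,y) : |x-y| ≤ min(1, 1/|x|)}`. -/
def localN (n : ℕ) : Set (EuclideanSpace ℝ (Fin n) × EuclideanSpace ℝ (Fin n)) :=
  {p | ‖p.1 - p.2‖ ≤ 1 ∧ ‖p.1 - p.2‖ * ‖p.1‖ ≤ 1}

/-- The kernel `Q(x,y) = sup_{r>0} γ₋₁(B(x,r))⁻¹ χ_{Nᶜ}(x,y) χ_{B(x,r)}(y) e^{|y|²}`. -/
noncomputable def Qker (n : ℕ) (x y : EuclideanSpace ℝ (Fin n)) : ℝ≥0∞ :=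
  ⨆ (r : ℝ) (_ : 0 < r),
    (gammaM1 n (Metric.ball x r))⁻¹ *
      Set.indicator ((localN n)ᶜ) (fun _ => (1 : ℝ≥0∞)) (x, y) *
      Set.indicator (Metric.ball x r) (fun _ => (1 : ℝ≥0∞)) y *
      ENNReal.ofReal (Real.exp (‖y‖ ^ 2))

open Metric

namespace Stmt3Aux

noncomputable def rho (n : ℕ) (x : EuclideanSpace ℝ (Fin n)) : ℝ≥0∞ :=
  ENNReal.ofReal (Real.pi ^ ((n : ℝ) / 2) * Real.exp (‖x‖ ^ 2))

lemma gammaM1_eq (n : ℕ) : gammaM1 n = volume.withDensity (rho n) := rfl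

/-- the majorant kernel -/
noncomputable def Fm (n : ℕ) (y u : EuclideanSpace ℝ (Fin n)) : ℝ≥0∞ :=
  ENNReal.ofReal ((2*(1+‖y‖+2*‖u‖))^n *
    (Real.exp (-(‖u‖^2)/2) * Real.exp (-(‖u‖*‖y‖)/2)))

variable {n : ℕ}

lemma measurable_Fm : Measurable (fun p : EuclideanSpace ℝ (Fin n) × EuclideanSpace ℝ (Fin n) =>
    Fm n p.2 (p.1 - p.2)) := by
  apply ENNReal.measurable_ofReal.comp
  fun_prop

/-- Existence of an outward-pointing point. -/
lemma exists_far_point (hn : 1 ≤ n) (x : EuclideanSpace ℝ (Fin n)) {s : ℝ} (hs : 0 ≤ s) :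
    ∃ z : EuclideanSpace ℝ (Fin n), ‖z - x‖ = s ∧ ‖z‖ = ‖x‖ + s := by
  rcases eq_or_ne x 0 with rfl | hx
  · refine ⟨s • EuclideanSpace.single (⟨0, hn⟩ : Fin n) (1:ℝ), ?_, ?_⟩ <;>
      simp [norm_smul, EuclideanSpace.norm_single, abs_of_nonneg hs]
  · have hX : 0 < ‖x‖ := norm_pos_iff.2 hx
    refine ⟨(1 + s / ‖x‖) • x, ?_, ?_⟩
    · have : (1 + s / ‖x‖) • x - x = (s / ‖x‖) • x := by
        rw [add_smul, one_smul]; abel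
      rw [this, norm_smul, Real.norm_eq_abs, abs_of_nonneg (by positivity)]
      field_simp
    · rw [norm_smul, Real.norm_eq_abs, abs_of_nonneg (by positivity)]
      field_simp

/-- Lower bound for the inverse-Gaussian measure of a ball with large radius. -/
lemma ball_lower (hn : 1 ≤ n) (x : EuclideanSpace ℝ (Fin n)) {d : ℝ}
    (hd : 1 < d * (1 + ‖x‖)) :
    ENNReal.ofReal (Real.pi ^ ((n : ℝ) / 2) * Real.exp ((‖x‖+d)^2 - 2) *
        (1/(2*(1+‖x‖+d)))^n) * volume (Metric.ball (0 : EuclideanSpace ℝ (Fin n)) 1)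
      ≤ gammaM1 n (Metric.ball x d) := by
  have hX : 0 ≤ ‖x‖ := norm_nonneg x
  have hd0 : 0 < d := by nlinarith
  set X := ‖x‖ with hXdef
  set δ : ℝ := 1/(2*(1+X+d)) with hδdef
  have hδ0 : 0 < δ := by positivity
  have hδd : δ ≤ d := by
    rw [hδdef, div_le_iff₀ (by positivity)]
    nlinarith
  obtain ⟨z, hz1, hz2⟩ := exists_far_point hn x (s := d - δ) (by linarith)
  have hsub : Metric.ball z δ ⊆ Metric.ball x d := by
    intro w hw
    rw [mem_ball] at hw ⊢
    have : dist w x ≤ dist w z + dist z x := dist_triangle w z x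
    have hzx : dist z x = d - δ := by rw [dist_eq_norm]; exact hz1
    linarith
  have key : ∀ w ∈ Metric.ball z δ,
      ENNReal.ofReal (Real.pi ^ ((n : ℝ) / 2) * Real.exp ((X+d)^2 - 2)) ≤ rho n w := by
    intro w hw
    rw [mem_ball] at hw
    have hwz : ‖z‖ - ‖z - w‖ ≤ ‖w‖ := by
      have := norm_sub_norm_le z w
      have h2 : ‖z‖ - ‖w‖ ≤ ‖z - w‖ := this
      linarith
    have hzw : ‖z - w‖ < δ := by rw [dist_eq_norm] at hw; rwa [norm_sub_rev]
    have hwlow : X + d - 2*δ ≤ ‖w‖ := by rw [hz2] at hwz; linarith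
    have hnn : 0 ≤ X + d - 2*δ := by
      have h1 : 2*δ*(1+X+d) = 1 := by rw [hδdef]; field_simp
      nlinarith
    have hsq : (X+d)^2 - 2 ≤ ‖w‖^2 := by
      have h1 : 2*δ*(1+X+d) = 1 := by rw [hδdef]; field_simp
      have h2 : (X + d - 2*δ)^2 ≤ ‖w‖^2 := by
        apply sq_le_sq' <;> nlinarith [norm_nonneg w]
      nlinarith
    unfold rho
    apply ENNReal.ofReal_le_ofReal
    have hp : (0:ℝ) < Real.pi ^ ((n : ℝ) / 2) := Real.rpow_pos_of_pos Real.pi_pos _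
    exact mul_le_mul_of_nonneg_left (Real.exp_le_exp.2 hsq) hp.le
  calc ENNReal.ofReal (Real.pi ^ ((n : ℝ) / 2) * Real.exp ((X+d)^2 - 2) * (1/(2*(1+X+d)))^n) *
        volume (Metric.ball (0 : EuclideanSpace ℝ (Fin n)) 1)
      = ENNReal.ofReal (Real.pi ^ ((n : ℝ) / 2) * Real.exp ((X+d)^2 - 2)) *
        (ENNReal.ofReal (δ^n) * volume (Metric.ball (0 : EuclideanSpace ℝ (Fin n)) 1)) := by
        rw [← mul_assoc, ← ENNReal.ofReal_mul (by positivity)]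
    _ = ENNReal.ofReal (Real.pi ^ ((n : ℝ) / 2) * Real.exp ((X+d)^2 - 2)) *
        volume (Metric.ball z δ) := by
        rw [Measure.addHaar_ball_of_pos volume z hδ0, finrank_euclideanSpace_fin]
    _ = ∫⁻ _ in Metric.ball z δ,
          ENNReal.ofReal (Real.pi ^ ((n : ℝ) / 2) * Real.exp ((X+d)^2 - 2)) ∂volume := by
        rw [setLIntegral_const, mul_comm]
    _ ≤ ∫⁻ w in Metric.ball z δ, rho n w ∂volume := by
        apply setLIntegral_mono (by unfold rho; fun_prop)
        intro w hw
        exact key w hw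
    _ ≤ ∫⁻ w in Metric.ball x d, rho n w ∂volume := by
        apply lintegral_mono_set hsub
    _ = gammaM1 n (Metric.ball x d) := by
        rw [gammaM1_eq, withDensity_apply _ measurableSet_ball]

/-- key pointwise bound -/
lemma qker_le (hn : 1 ≤ n) (x y : EuclideanSpace ℝ (Fin n)) :
    rho n x * Qker n x y ≤
      ENNReal.ofReal (Real.exp 2) *
        (volume (Metric.ball (0 : EuclideanSpace ℝ (Fin n)) 1))⁻¹ *
        ENNReal.ofReal (Real.exp (‖y‖^2)) * Fm n y (x - y) := by
  by_cases hN : (x, y) ∈ localN n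
  · have h0 : Qker n x y = 0 := by
      unfold Qker
      simp only [Set.indicator_of_notMem (by simpa using hN : (x,y) ∉ (localN n)ᶜ)]
      simp
    simp [h0]
  · have hN' : (x, y) ∈ (localN n)ᶜ := hN
    set d : ℝ := ‖x - y‖ with hddef
    have hd1 : 1 < d * (1 + ‖x‖) := by
      have : ¬ (d ≤ 1 ∧ d * ‖x‖ ≤ 1) := hN
      push_neg at this
      rcases le_or_gt d 1 with h | h
      · have := this h
        nlinarith [norm_nonneg (x - y)]
      · nlinarith [norm_nonneg x, norm_nonneg (x - y)]
    -- step 1 : Qker ≤ (gammaM1 (ball x d))⁻¹ * e^{|y|²}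
    have step1 : Qker n x y ≤ (gammaM1 n (Metric.ball x d))⁻¹ *
        ENNReal.ofReal (Real.exp (‖y‖^2)) := by
      unfold Qker
      apply iSup₂_le
      intro r hr
      by_cases hy : y ∈ Metric.ball x r
      · rw [Set.indicator_of_mem hN', Set.indicator_of_mem hy]
        have hsub : Metric.ball x d ⊆ Metric.ball x r := by
          apply Metric.ball_subset_ball
          rw [mem_ball, dist_eq_norm, ← norm_sub_rev] at hy
          exact hy.le
        have hmono := measure_mono (μ := gammaM1 n) hsub
        rw [mul_one, mul_one]
        exact mul_le_mul_left (ENNReal.inv_le_inv.2 hmono) _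
      · rw [Set.indicator_of_notMem hy]
        simp
    set v : ℝ≥0∞ := volume (Metric.ball (0 : EuclideanSpace ℝ (Fin n)) 1) with hvdef
    have hv0 : v ≠ 0 := (measure_ball_pos volume _ one_pos).ne'
    have hvtop : v ≠ ∞ := (measure_ball_lt_top).ne
    set X := ‖x‖ with hXdef
    set b := ‖y‖ with hbdef
    set P : ℝ := Real.pi ^ ((n : ℝ) / 2) * Real.exp ((X+d)^2 - 2) * (1/(2*(1+X+d)))^n
      with hPdef
    have hP0 : 0 < P := by
      have : (0:ℝ) < Real.pi ^ ((n : ℝ) / 2) := Real.rpow_pos_of_pos Real.pi_pos _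
      have hd0 : 0 < d := by nlinarith [norm_nonneg x]
      positivity
    have hinv : (gammaM1 n (Metric.ball x d))⁻¹ ≤ ENNReal.ofReal P⁻¹ * v⁻¹ := by
      have h1 := ball_lower hn x hd1
      calc (gammaM1 n (Metric.ball x d))⁻¹ ≤ (ENNReal.ofReal P * v)⁻¹ :=
            ENNReal.inv_le_inv.2 h1
        _ = (ENNReal.ofReal P)⁻¹ * v⁻¹ :=
            ENNReal.mul_inv (Or.inl (by simpa using hP0)) (Or.inl ENNReal.ofReal_ne_top)
        _ = ENNReal.ofReal P⁻¹ * v⁻¹ := by rw [ENNReal.ofReal_inv_of_pos hP0]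
    have hpi0 : (0:ℝ) < Real.pi ^ ((n : ℝ) / 2) := Real.rpow_pos_of_pos Real.pi_pos _
    calc rho n x * Qker n x y
        ≤ rho n x * ((gammaM1 n (Metric.ball x d))⁻¹ * ENNReal.ofReal (Real.exp (‖y‖^2))) :=
          mul_le_mul_right step1 _
      _ ≤ rho n x * ((ENNReal.ofReal P⁻¹ * v⁻¹) * ENNReal.ofReal (Real.exp (‖y‖^2))) := by
          gcongr
      _ = ENNReal.ofReal (Real.pi ^ ((n : ℝ) / 2) * Real.exp (X^2) * P⁻¹ *
            Real.exp (b^2)) * v⁻¹ := by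
          unfold rho
          rw [ENNReal.ofReal_mul
                (mul_nonneg (mul_nonneg hpi0.le (Real.exp_pos _).le) (inv_nonneg.2 hP0.le)),
              ENNReal.ofReal_mul (mul_nonneg hpi0.le (Real.exp_pos _).le),
              ENNReal.ofReal_mul hpi0.le]
          ring
      _ ≤ ENNReal.ofReal (Real.exp 2 *
            ((2*(1+b+2*d))^n * (Real.exp (-(d^2)/2) * Real.exp (-(d*b)/2))) *
            Real.exp (b^2)) * v⁻¹ := by
          refine mul_le_mul_left (ENNReal.ofReal_le_ofReal ?_) _
          have hXb : X ≤ b + d := by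
            calc X = ‖y + (x - y)‖ := by rw [hXdef]; congr 1; abel
              _ ≤ b + d := norm_add_le y (x - y)
          have hbX : b ≤ X + d := by
            calc b = ‖x - (x - y)‖ := by rw [hbdef]; congr 1; abel
              _ ≤ X + d := norm_sub_le x (x - y)
          have hd0 : 0 < d := by nlinarith [norm_nonneg x]
          have hX0 : 0 ≤ X := norm_nonneg x
          have hb0 : 0 ≤ b := norm_nonneg y
          have hpi : (0:ℝ) < Real.pi ^ ((n : ℝ) / 2) := Real.rpow_pos_of_pos Real.pi_pos _
          set Qq : ℝ := (2*(1+b+2*d))^n * (Real.exp (-(d^2)/2) * Real.exp (-(d*b)/2))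
            with hQdef
          set Rr : ℝ := Real.exp ((X+d)^2 - 2) * (1/(2*(1+X+d)))^n with hRdef
          have key : Real.exp (X^2) ≤ Real.exp 2 * Qq * Rr := by
            have hA : Real.exp (X^2) ≤
                Real.exp (2 + -(d^2)/2 + -(d*b)/2 + ((X+d)^2 - 2)) := by
              apply Real.exp_le_exp.2
              nlinarith
            have hq : (1:ℝ) ≤ (2*(1+b+2*d)) * (1/(2*(1+X+d))) := by
              rw [mul_one_div, le_div_iff₀ (by positivity)]
              nlinarith
            have hB : (1:ℝ) ≤ (2*(1+b+2*d))^n * (1/(2*(1+X+d)))^n := by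
              rw [← mul_pow]
              calc (1:ℝ) = 1^n := (one_pow n).symm
                _ ≤ ((2*(1+b+2*d)) * (1/(2*(1+X+d))))^n := pow_le_pow_left₀ one_pos.le hq n
            calc Real.exp (X^2) = Real.exp (X^2) * 1 := (mul_one _).symm
              _ ≤ Real.exp (2 + -(d^2)/2 + -(d*b)/2 + ((X+d)^2 - 2)) *
                  ((2*(1+b+2*d))^n * (1/(2*(1+X+d)))^n) :=
                mul_le_mul hA hB one_pos.le (Real.exp_pos _).le
              _ = Real.exp 2 * Qq * Rr := by
                rw [hQdef, hRdef, Real.exp_add, Real.exp_add, Real.exp_add]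
                ring
          have hRr0 : 0 < Rr := by rw [hRdef]; positivity
          have hPR : P = Real.pi ^ ((n : ℝ) / 2) * Rr := by rw [hPdef, hRdef]; ring
          have h3 : Real.exp (X^2) * Rr⁻¹ ≤ Real.exp 2 * Qq := by
            rw [← div_eq_mul_inv, div_le_iff₀ hRr0]
            exact key
          calc Real.pi ^ ((n : ℝ) / 2) * Real.exp (X^2) * P⁻¹ * Real.exp (b^2)
              = (Real.exp (X^2) * Rr⁻¹) * Real.exp (b^2) := by
                rw [hPR, mul_inv]
                field_simp
            _ ≤ (Real.exp 2 * Qq) * Real.exp (b^2) :=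
                mul_le_mul_of_nonneg_right h3 (Real.exp_pos _).le
            _ = Real.exp 2 * Qq * Real.exp (b^2) := by ring
      _ = ENNReal.ofReal (Real.exp 2) * v⁻¹ * ENNReal.ofReal (Real.exp (b^2)) *
            Fm n y (x - y) := by
          unfold Fm
          rw [← hbdef, ← hddef]
          rw [ENNReal.ofReal_mul (by positivity), ENNReal.ofReal_mul (by positivity)]
          ring

lemma lintegral_ofReal_lt_top {f : EuclideanSpace ℝ (Fin n) → ℝ}
    (hf : Integrable f) (h0 : ∀ u, 0 ≤ f u) :
    (∫⁻ u, ENNReal.ofReal (f u) ∂volume) < ∞ := by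
  have h2 := hf.hasFiniteIntegral
  rwa [hasFiniteIntegral_iff_ofReal (Filter.Eventually.of_forall h0)] at h2

/-- Gaussian has finite integral on Euclidean space. -/
lemma gauss_lt_top :
    (∫⁻ u : EuclideanSpace ℝ (Fin n), ENNReal.ofReal (Real.exp (-(‖u‖^2)/4)) ∂volume) < ∞ := by
  have h := GaussianFourier.integrable_cexp_neg_mul_sq_norm_add (V := EuclideanSpace ℝ (Fin n))
    (b := (1/4 : ℂ)) (by norm_num) 0 0
  have h2 : Integrable (fun u : EuclideanSpace ℝ (Fin n) => Real.exp (-(‖u‖^2)/4)) := by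
    have := h.norm
    convert this using 2 with u
    rw [Complex.norm_exp]
    congr 1
    simp
    rw [← Complex.ofReal_pow, Complex.ofReal_re]
    ring
  exact lintegral_ofReal_lt_top h2 (fun u => (Real.exp_pos _).le)

/-- Polynomial times Gaussian integral bound. -/
lemma poly_gauss {a : ℝ} (ha : 0 ≤ a) :
    (∫⁻ u : EuclideanSpace ℝ (Fin n),
        ENNReal.ofReal ((a + 4*‖u‖)^n * Real.exp (-(‖u‖^2)/2)) ∂volume)
      ≤ ENNReal.ofReal ((a+1)^n * Real.exp (16*(n:ℝ)^2)) *
        ∫⁻ u : EuclideanSpace ℝ (Fin n), ENNReal.ofReal (Real.exp (-(‖u‖^2)/4)) ∂volume := by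
  rw [← lintegral_const_mul' _ _ ENNReal.ofReal_ne_top]
  apply lintegral_mono
  intro u
  dsimp only
  rw [← ENNReal.ofReal_mul (by positivity)]
  apply ENNReal.ofReal_le_ofReal
  set t := ‖u‖ with htdef
  have ht : 0 ≤ t := norm_nonneg u
  have h1 : (a + 4*t)^n ≤ (a+1)^n * Real.exp (4*(n:ℝ)*t) := by
    have ha1 : a + 4*t ≤ (a+1)*(1+4*t) := by nlinarith
    have h2 : (a + 4*t)^n ≤ ((a+1)*(1+4*t))^n := pow_le_pow_left₀ (by positivity) ha1 n
    have h3 : (1+4*t)^n ≤ Real.exp (4*t)^n :=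
      pow_le_pow_left₀ (by positivity) (by linarith [Real.add_one_le_exp (4*t)]) n
    calc (a + 4*t)^n ≤ ((a+1)*(1+4*t))^n := h2
      _ = (a+1)^n * (1+4*t)^n := mul_pow _ _ _
      _ ≤ (a+1)^n * Real.exp (4*t)^n := by
          apply mul_le_mul_of_nonneg_left h3 (by positivity)
      _ = (a+1)^n * Real.exp (4*(n:ℝ)*t) := by
          rw [← Real.exp_nat_mul]
          ring_nf
  have h2 : Real.exp (4*(n:ℝ)*t) * Real.exp (-(t^2)/2) ≤
      Real.exp (16*(n:ℝ)^2) * Real.exp (-(t^2)/4) := by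
    rw [← Real.exp_add, ← Real.exp_add]
    apply Real.exp_le_exp.2
    nlinarith [sq_nonneg (t/2 - 4*(n:ℝ))]
  calc (a + 4*t)^n * Real.exp (-(t^2)/2)
      ≤ ((a+1)^n * Real.exp (4*(n:ℝ)*t)) * Real.exp (-(t^2)/2) :=
        mul_le_mul_of_nonneg_right h1 (Real.exp_pos _).le
    _ = (a+1)^n * (Real.exp (4*(n:ℝ)*t) * Real.exp (-(t^2)/2)) := by ring
    _ ≤ (a+1)^n * (Real.exp (16*(n:ℝ)^2) * Real.exp (-(t^2)/4)) := by
        apply mul_le_mul_of_nonneg_left h2 (by positivity)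
    _ = (a+1)^n * Real.exp (16*(n:ℝ)^2) * Real.exp (-(t^2)/4) := by ring

/-- Scaling for the exponential-of-norm integral. -/
lemma exp_norm_scaled {bb : ℝ} (hb : 0 < bb) :
    (∫⁻ u : EuclideanSpace ℝ (Fin n), ENNReal.ofReal (Real.exp (-(bb*‖u‖))) ∂volume)
      = ENNReal.ofReal ((1/bb)^n) *
        ∫⁻ u : EuclideanSpace ℝ (Fin n), ENNReal.ofReal (Real.exp (-‖u‖)) ∂volume := by
  have hmeas : Measurable fun v : EuclideanSpace ℝ (Fin n) =>
      ENNReal.ofReal (Real.exp (-‖v‖)) := by fun_prop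
  have h1 : ∀ u : EuclideanSpace ℝ (Fin n),
      ENNReal.ofReal (Real.exp (-(bb*‖u‖))) =
        (fun v : EuclideanSpace ℝ (Fin n) => ENNReal.ofReal (Real.exp (-‖v‖))) (bb • u) := by
    intro u
    simp [norm_smul, abs_of_pos hb]
  calc (∫⁻ u : EuclideanSpace ℝ (Fin n), ENNReal.ofReal (Real.exp (-(bb*‖u‖))) ∂volume)
      = ∫⁻ u : EuclideanSpace ℝ (Fin n),
          (fun v : EuclideanSpace ℝ (Fin n) => ENNReal.ofReal (Real.exp (-‖v‖))) (bb • u)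
            ∂volume := by
        simp_rw [h1]
    _ = ∫⁻ v, ENNReal.ofReal (Real.exp (-‖v‖))
          ∂(Measure.map (fun u : EuclideanSpace ℝ (Fin n) => bb • u) volume) :=
        (lintegral_map hmeas (measurable_const_smul bb)).symm
    _ = ENNReal.ofReal ((1/bb)^n) *
          ∫⁻ u : EuclideanSpace ℝ (Fin n), ENNReal.ofReal (Real.exp (-‖u‖)) ∂volume := by
        rw [Measure.map_addHaar_smul volume hb.ne', lintegral_smul_measure]
        congr 2
        rw [finrank_euclideanSpace_fin, abs_of_pos (by positivity)]
        rw [one_div, inv_pow]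

lemma pow_le_factorial_mul_exp (k : ℕ) {t : ℝ} (ht : 0 ≤ t) :
    t^k ≤ (k.factorial : ℝ) * Real.exp t := by
  have h1 : t^k / (k.factorial : ℝ) ≤ Real.exp t := by
    calc t^k / (k.factorial : ℝ)
        ≤ ∑ i ∈ Finset.range (k+1), t^i / (i.factorial : ℝ) :=
          Finset.single_le_sum (f := fun i => t^i / (i.factorial : ℝ))
            (fun i _ => by positivity) (Finset.self_mem_range_succ k)
      _ ≤ Real.exp t := Real.sum_le_exp_of_nonneg ht _
  rw [div_le_iff₀ (by positivity)] at h1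
  linarith [h1]

lemma exp_norm_lt_top :
    (∫⁻ u : EuclideanSpace ℝ (Fin n), ENNReal.ofReal (Real.exp (-‖u‖)) ∂volume) < ∞ := by
  have hb : ((Module.finrank ℝ (EuclideanSpace ℝ (Fin n)) : ℝ)) < ((n:ℝ)+1) := by
    rw [finrank_euclideanSpace_fin]; linarith
  have hfin := finite_integral_one_add_norm (E := EuclideanSpace ℝ (Fin n)) (μ := volume)
    (r := (n:ℝ)+1) hb
  have hpt : ∀ u : EuclideanSpace ℝ (Fin n),
      ENNReal.ofReal (Real.exp (-‖u‖)) ≤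
        ENNReal.ofReal (((n+1).factorial : ℝ) * Real.exp 1) *
          ENNReal.ofReal ((1 + ‖u‖) ^ (-((n:ℝ)+1))) := by
    intro u
    rw [← ENNReal.ofReal_mul (by positivity)]
    apply ENNReal.ofReal_le_ofReal
    set t := ‖u‖ with htdef
    have ht : 0 ≤ t := norm_nonneg u
    have h1 : (1+t)^(n+1) ≤ ((n+1).factorial : ℝ) * Real.exp (1+t) :=
      pow_le_factorial_mul_exp (n+1) (by linarith)
    have hrp : (1 + t) ^ (-((n:ℝ)+1)) = ((1+t)^(n+1) : ℝ)⁻¹ := by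
      rw [Real.rpow_neg (by linarith), ← Real.rpow_natCast (1+t) (n+1)]
      push_cast
      ring_nf
    rw [hrp, ← div_eq_mul_inv, le_div_iff₀ (by positivity)]
    calc Real.exp (-t) * (1+t)^(n+1)
        ≤ Real.exp (-t) * (((n+1).factorial : ℝ) * Real.exp (1+t)) :=
          mul_le_mul_of_nonneg_left h1 (Real.exp_pos _).le
      _ = ((n+1).factorial : ℝ) * Real.exp 1 := by
          have : Real.exp (-t) * Real.exp (1+t) = Real.exp 1 := by
            rw [← Real.exp_add]; ring_nf
          calc Real.exp (-t) * (((n+1).factorial : ℝ) * Real.exp (1+t))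
              = ((n+1).factorial : ℝ) * (Real.exp (-t) * Real.exp (1+t)) := by ring
            _ = ((n+1).factorial : ℝ) * Real.exp 1 := by rw [this]
  calc (∫⁻ u : EuclideanSpace ℝ (Fin n), ENNReal.ofReal (Real.exp (-‖u‖)) ∂volume)
      ≤ ∫⁻ u : EuclideanSpace ℝ (Fin n),
          ENNReal.ofReal (((n+1).factorial : ℝ) * Real.exp 1) *
            ENNReal.ofReal ((1 + ‖u‖) ^ (-((n:ℝ)+1))) ∂volume := lintegral_mono hpt
    _ = ENNReal.ofReal (((n+1).factorial : ℝ) * Real.exp 1) *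
          ∫⁻ u : EuclideanSpace ℝ (Fin n),
            ENNReal.ofReal ((1 + ‖u‖) ^ (-((n:ℝ)+1))) ∂volume :=
        lintegral_const_mul' _ _ ENNReal.ofReal_ne_top
    _ < ∞ := ENNReal.mul_lt_top ENNReal.ofReal_lt_top hfin

noncomputable def Gn (n : ℕ) : ℝ≥0∞ :=
  ∫⁻ u : EuclideanSpace ℝ (Fin n), ENNReal.ofReal (Real.exp (-(‖u‖^2)/4)) ∂volume

noncomputable def Ln (n : ℕ) : ℝ≥0∞ :=
  ∫⁻ u : EuclideanSpace ℝ (Fin n), ENNReal.ofReal (Real.exp (-‖u‖)) ∂volume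

noncomputable def D1 (n : ℕ) : ℝ :=
  (7:ℝ)^n * Real.exp (16*(n:ℝ)^2) +
    (32*(n:ℝ))^n * (n.factorial : ℝ) * Real.exp 1 * Real.exp (16*(n:ℝ)^2)

lemma Fm_integral_le (hn : 1 ≤ n) (y : EuclideanSpace ℝ (Fin n)) :
    (∫⁻ u, Fm n y u ∂volume) ≤
      ENNReal.ofReal (D1 n) * Gn n + ENNReal.ofReal ((8:ℝ)^n) * Ln n := by
  have hn1 : (1:ℝ) ≤ (n:ℝ) := by exact_mod_cast hn
  set b := ‖y‖ with hbdef
  have hb0 : 0 ≤ b := norm_nonneg y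
  have hD1a : (7:ℝ)^n * Real.exp (16*(n:ℝ)^2) ≤ D1 n := by
    unfold D1
    have : 0 ≤ (32*(n:ℝ))^n * (n.factorial : ℝ) * Real.exp 1 * Real.exp (16*(n:ℝ)^2) := by
      positivity
    linarith
  have hD1b : (32*(n:ℝ))^n * (n.factorial : ℝ) * Real.exp 1 * Real.exp (16*(n:ℝ)^2) ≤ D1 n := by
    unfold D1
    have : 0 ≤ (7:ℝ)^n * Real.exp (16*(n:ℝ)^2) := by positivity
    linarith
  rcases le_or_gt b 2 with hb | hb
  · -- small |y|
    have hpt : ∀ u : EuclideanSpace ℝ (Fin n), Fm n y u ≤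
        ENNReal.ofReal ((6 + 4*‖u‖)^n * Real.exp (-(‖u‖^2)/2)) := by
      intro u
      unfold Fm
      rw [← hbdef]
      apply ENNReal.ofReal_le_ofReal
      set t := ‖u‖; have ht : 0 ≤ t := norm_nonneg u
      have h1 : (2*(1+b+2*t))^n ≤ (6+4*t)^n :=
        pow_le_pow_left₀ (by positivity) (by nlinarith) n
      have h2 : Real.exp (-(t^2)/2) * Real.exp (-(t*b)/2) ≤ Real.exp (-(t^2)/2) := by
        have : Real.exp (-(t*b)/2) ≤ 1 := Real.exp_le_one_iff.2 (by nlinarith)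
        nlinarith [Real.exp_pos (-(t^2)/2), Real.exp_pos (-(t*b)/2)]
      exact mul_le_mul h1 h2 (by positivity) (by positivity)
    calc (∫⁻ u, Fm n y u ∂volume)
        ≤ ∫⁻ u : EuclideanSpace ℝ (Fin n),
            ENNReal.ofReal ((6 + 4*‖u‖)^n * Real.exp (-(‖u‖^2)/2)) ∂volume :=
          lintegral_mono hpt
      _ ≤ ENNReal.ofReal (((6:ℝ)+1)^n * Real.exp (16*(n:ℝ)^2)) * Gn n :=
          poly_gauss (by norm_num)
      _ ≤ ENNReal.ofReal (D1 n) * Gn n := by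
          apply mul_le_mul_left
          apply ENNReal.ofReal_le_ofReal
          calc ((6:ℝ)+1)^n * Real.exp (16*(n:ℝ)^2)
              = (7:ℝ)^n * Real.exp (16*(n:ℝ)^2) := by norm_num
            _ ≤ D1 n := hD1a
      _ ≤ ENNReal.ofReal (D1 n) * Gn n + ENNReal.ofReal ((8:ℝ)^n) * Ln n :=
          self_le_add_right _ _
  · -- large |y|
    set T1 : EuclideanSpace ℝ (Fin n) → ℝ≥0∞ := fun u =>
      ENNReal.ofReal (Real.exp (-(b/8)) * (((2+2*b) + 4*‖u‖)^n * Real.exp (-(‖u‖^2)/2)))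
      with hT1def
    set T2 : EuclideanSpace ℝ (Fin n) → ℝ≥0∞ := fun u =>
      ENNReal.ofReal ((2*(2+b))^n * Real.exp (-((b/2)*‖u‖))) with hT2def
    have hpt : ∀ u, Fm n y u ≤ T1 u + T2 u := by
      intro u
      unfold Fm
      rw [← hbdef]
      set t := ‖u‖ with htdef; have ht : 0 ≤ t := norm_nonneg u
      rcases le_or_gt (1/2 : ℝ) t with h12 | h12
      · refine le_trans ?_ (self_le_add_right (T1 u) (T2 u))
        rw [hT1def]
        apply ENNReal.ofReal_le_ofReal
        have he : Real.exp (-(t*b)/2) ≤ Real.exp (-(b/8)) :=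
          Real.exp_le_exp.2 (by nlinarith)
        have heq : 2*(1+b+2*t) = (2+2*b) + 4*t := by ring
        rw [heq]
        calc ((2+2*b) + 4*t)^n * (Real.exp (-(t^2)/2) * Real.exp (-(t*b)/2))
            = (((2+2*b) + 4*t)^n * Real.exp (-(t^2)/2)) * Real.exp (-(t*b)/2) := by ring
          _ ≤ (((2+2*b) + 4*t)^n * Real.exp (-(t^2)/2)) * Real.exp (-(b/8)) := by
              apply mul_le_mul_of_nonneg_left he (by positivity)
          _ = Real.exp (-(b/8)) * (((2+2*b) + 4*t)^n * Real.exp (-(t^2)/2)) := by ring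
      · refine le_trans ?_ (self_le_add_left (T2 u) (T1 u))
        rw [hT2def]
        apply ENNReal.ofReal_le_ofReal
        have h1 : (2*(1+b+2*t))^n ≤ (2*(2+b))^n :=
          pow_le_pow_left₀ (by positivity) (by nlinarith) n
        have h2 : Real.exp (-(t^2)/2) * Real.exp (-(t*b)/2) ≤ Real.exp (-((b/2)*t)) := by
          have he1 : Real.exp (-(t^2)/2) ≤ 1 := Real.exp_le_one_iff.2 (by nlinarith)
          have he2 : Real.exp (-(t*b)/2) = Real.exp (-((b/2)*t)) := by ring_nf
          nlinarith [Real.exp_pos (-(t*b)/2), he2 ▸ le_refl (Real.exp (-(t*b)/2))]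
        exact mul_le_mul h1 h2 (by positivity) (by positivity)
    have hT1meas : Measurable T1 := by rw [hT1def]; fun_prop
    have hint1 : (∫⁻ u, T1 u ∂volume) ≤
        ENNReal.ofReal ((32*(n:ℝ))^n * (n.factorial : ℝ) * Real.exp 1 *
          Real.exp (16*(n:ℝ)^2)) * Gn n := by
      have hsplit : ∀ u : EuclideanSpace ℝ (Fin n), T1 u =
          ENNReal.ofReal (Real.exp (-(b/8))) *
            ENNReal.ofReal (((2+2*b) + 4*‖u‖)^n * Real.exp (-(‖u‖^2)/2)) := by
        intro u
        rw [hT1def, ← ENNReal.ofReal_mul (Real.exp_pos _).le]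
      calc (∫⁻ u, T1 u ∂volume)
          = ENNReal.ofReal (Real.exp (-(b/8))) *
              ∫⁻ u : EuclideanSpace ℝ (Fin n),
                ENNReal.ofReal (((2+2*b) + 4*‖u‖)^n * Real.exp (-(‖u‖^2)/2)) ∂volume := by
            simp_rw [hsplit]
            exact lintegral_const_mul' _ _ ENNReal.ofReal_ne_top
        _ ≤ ENNReal.ofReal (Real.exp (-(b/8))) *
              (ENNReal.ofReal (((2+2*b)+1)^n * Real.exp (16*(n:ℝ)^2)) * Gn n) :=
            mul_le_mul_right (poly_gauss (by linarith)) _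
        _ = ENNReal.ofReal (Real.exp (-(b/8)) * (((2+2*b)+1)^n * Real.exp (16*(n:ℝ)^2))) *
              Gn n := by
            rw [ENNReal.ofReal_mul (Real.exp_pos _).le, mul_assoc]
        _ ≤ ENNReal.ofReal ((32*(n:ℝ))^n * (n.factorial : ℝ) * Real.exp 1 *
              Real.exp (16*(n:ℝ)^2)) * Gn n := by
            apply mul_le_mul_left
            apply ENNReal.ofReal_le_ofReal
            have hkey : Real.exp (-(b/8)) * ((3+2*b)^n) ≤
                (32*(n:ℝ))^n * (n.factorial : ℝ) * Real.exp 1 := by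
              have hfr : ((3+2*b)/(32*(n:ℝ)))^n ≤
                  (n.factorial : ℝ) * Real.exp ((3+2*b)/(32*(n:ℝ))) :=
                pow_le_factorial_mul_exp n (by positivity)
              have hsplit2 : (3+2*b)^n = (32*(n:ℝ))^n * ((3+2*b)/(32*(n:ℝ)))^n := by
                rw [← mul_pow]
                congr 1
                field_simp
              have hexp : Real.exp (-(b/8)) * Real.exp ((3+2*b)/(32*(n:ℝ))) ≤ Real.exp 1 := by
                rw [← Real.exp_add]
                apply Real.exp_le_exp.2
                have hdiv : (3+2*b)/(32*(n:ℝ)) ≤ (3+2*b)/32 := by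
                  apply div_le_div_of_nonneg_left (by linarith) (by norm_num)
                  nlinarith
                nlinarith
              calc Real.exp (-(b/8)) * ((3+2*b)^n)
                  = Real.exp (-(b/8)) * ((32*(n:ℝ))^n * ((3+2*b)/(32*(n:ℝ)))^n) := by
                    rw [hsplit2]
                _ ≤ Real.exp (-(b/8)) * ((32*(n:ℝ))^n *
                      ((n.factorial : ℝ) * Real.exp ((3+2*b)/(32*(n:ℝ))))) := by
                    apply mul_le_mul_of_nonneg_left _ (Real.exp_pos _).le
                    apply mul_le_mul_of_nonneg_left hfr (by positivity)
                _ = (32*(n:ℝ))^n * (n.factorial : ℝ) *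
                      (Real.exp (-(b/8)) * Real.exp ((3+2*b)/(32*(n:ℝ)))) := by ring
                _ ≤ (32*(n:ℝ))^n * (n.factorial : ℝ) * Real.exp 1 := by
                    apply mul_le_mul_of_nonneg_left hexp (by positivity)
            calc Real.exp (-(b/8)) * (((2+2*b)+1)^n * Real.exp (16*(n:ℝ)^2))
                = (Real.exp (-(b/8)) * ((3+2*b)^n)) * Real.exp (16*(n:ℝ)^2) := by
                  ring_nf
              _ ≤ ((32*(n:ℝ))^n * (n.factorial : ℝ) * Real.exp 1) *
                    Real.exp (16*(n:ℝ)^2) :=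
                  mul_le_mul_of_nonneg_right hkey (Real.exp_pos _).le
    have hint2 : (∫⁻ u, T2 u ∂volume) ≤ ENNReal.ofReal ((8:ℝ)^n) * Ln n := by
      have hsplit : ∀ u : EuclideanSpace ℝ (Fin n), T2 u =
          ENNReal.ofReal ((2*(2+b))^n) *
            ENNReal.ofReal (Real.exp (-((b/2)*‖u‖))) := by
        intro u
        rw [hT2def, ← ENNReal.ofReal_mul (by positivity)]
      calc (∫⁻ u, T2 u ∂volume)
          = ENNReal.ofReal ((2*(2+b))^n) *
              ∫⁻ u : EuclideanSpace ℝ (Fin n),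
                ENNReal.ofReal (Real.exp (-((b/2)*‖u‖))) ∂volume := by
            simp_rw [hsplit]
            exact lintegral_const_mul' _ _ ENNReal.ofReal_ne_top
        _ = ENNReal.ofReal ((2*(2+b))^n) * (ENNReal.ofReal ((1/(b/2))^n) * Ln n) := by
            rw [exp_norm_scaled (by linarith)]
            rfl
        _ = ENNReal.ofReal ((2*(2+b))^n * (1/(b/2))^n) * Ln n := by
            rw [ENNReal.ofReal_mul (by positivity), mul_assoc]
        _ ≤ ENNReal.ofReal ((8:ℝ)^n) * Ln n := by
            apply mul_le_mul_left
            apply ENNReal.ofReal_le_ofReal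
            rw [← mul_pow]
            apply pow_le_pow_left₀ (by positivity)
            rw [mul_one_div, div_le_iff₀ (by linarith)]
            nlinarith
    calc (∫⁻ u, Fm n y u ∂volume) ≤ ∫⁻ u, (T1 u + T2 u) ∂volume := lintegral_mono hpt
      _ = (∫⁻ u, T1 u ∂volume) + ∫⁻ u, T2 u ∂volume := lintegral_add_left hT1meas _
      _ ≤ ENNReal.ofReal ((32*(n:ℝ))^n * (n.factorial : ℝ) * Real.exp 1 *
            Real.exp (16*(n:ℝ)^2)) * Gn n + ENNReal.ofReal ((8:ℝ)^n) * Ln n :=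
          add_le_add hint1 hint2
      _ ≤ ENNReal.ofReal (D1 n) * Gn n + ENNReal.ofReal ((8:ℝ)^n) * Ln n := by
          apply add_le_add_left
          exact mul_le_mul_left (ENNReal.ofReal_le_ofReal hD1b) _

end Stmt3Aux

open Stmt3Aux

/-- The operator `𝒬(g)(x) = ∫ Q(x,y) g(y) dy` is bounded on `L¹(ℝⁿ, γ₋₁)`. -/
theorem stmt3 (n : ℕ) (hn : 1 ≤ n) :
    ∃ C : ℝ, 0 < C ∧ ∀ g : EuclideanSpace ℝ (Fin n) → ℝ≥0∞, Measurable g →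
      (∫⁻ x, (∫⁻ y, Qker n x y * g y ∂volume) ∂gammaM1 n)
        ≤ ENNReal.ofReal C * ∫⁻ y, g y ∂gammaM1 n := by
  classical
  set v : ℝ≥0∞ := volume (Metric.ball (0 : EuclideanSpace ℝ (Fin n)) 1) with hvdef
  have hv0 : v ≠ 0 := (measure_ball_pos volume _ one_pos).ne'
  have hvtop : v ≠ ∞ := measure_ball_lt_top.ne
  set C0 : ℝ≥0∞ := ENNReal.ofReal (Real.exp 2) * v⁻¹ with hC0def
  have hC0top : C0 ≠ ∞ := ENNReal.mul_ne_top ENNReal.ofReal_ne_top (ENNReal.inv_ne_top.2 hv0)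
  set Bn : ℝ≥0∞ := ENNReal.ofReal (D1 n) * Gn n + ENNReal.ofReal ((8:ℝ)^n) * Ln n with hBndef
  have hBntop : Bn ≠ ∞ := by
    rw [hBndef]
    exact (ENNReal.add_lt_top.2 ⟨ENNReal.mul_lt_top ENNReal.ofReal_lt_top gauss_lt_top,
      ENNReal.mul_lt_top ENNReal.ofReal_lt_top exp_norm_lt_top⟩).ne
  set ph : ℝ := Real.pi ^ ((n:ℝ)/2) with hphdef
  have hph : 0 < ph := Real.rpow_pos_of_pos Real.pi_pos _
  have hph0 : ENNReal.ofReal ph ≠ 0 := (ENNReal.ofReal_pos.2 hph).ne'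
  have hphtop : ENNReal.ofReal ph ≠ ∞ := ENNReal.ofReal_ne_top
  set cy : EuclideanSpace ℝ (Fin n) → ℝ≥0∞ := fun y => ENNReal.ofReal (Real.exp (‖y‖^2))
    with hcydef
  set T : ℝ≥0∞ := (C0 * Bn) * (ENNReal.ofReal ph)⁻¹ with hTdef
  have hTtop : T ≠ ∞ := by
    rw [hTdef]
    exact ENNReal.mul_ne_top (ENNReal.mul_ne_top hC0top hBntop) (ENNReal.inv_ne_top.2 hph0)
  refine ⟨T.toReal + 1, by positivity, fun g hg => ?_⟩
  have hρmeas : Measurable (rho n) := by unfold rho; fun_prop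
  have hρfin : ∀ᵐ x : EuclideanSpace ℝ (Fin n) ∂volume, rho n x < ∞ :=
    Filter.Eventually.of_forall fun x => ENNReal.ofReal_lt_top
  have hkey : C0 * Bn ≤ ENNReal.ofReal (T.toReal + 1) * ENNReal.ofReal ph := by
    have h1 : C0 * Bn = T * ENNReal.ofReal ph := by
      rw [hTdef, mul_assoc (C0 * Bn), ENNReal.inv_mul_cancel hph0 hphtop, mul_one]
    rw [h1]
    apply mul_le_mul_left
    calc T = ENNReal.ofReal T.toReal := (ENNReal.ofReal_toReal hTtop).symm
      _ ≤ ENNReal.ofReal (T.toReal + 1) := ENNReal.ofReal_le_ofReal (by linarith)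
  -- measurability for Tonelli
  have hmeasH : Measurable (Function.uncurry fun x y : EuclideanSpace ℝ (Fin n) =>
      (ENNReal.ofReal (Real.exp 2) * v⁻¹ * cy y * Fm n y (x - y)) * g y) := by
    simp only [Function.uncurry, hcydef]
    exact ((measurable_const.mul
      (by fun_prop : Measurable fun p : EuclideanSpace ℝ (Fin n) × EuclideanSpace ℝ (Fin n) =>
        ENNReal.ofReal (Real.exp (‖p.2‖^2)))).mul measurable_Fm).mul (hg.comp measurable_snd)
  have hFymeas : ∀ y : EuclideanSpace ℝ (Fin n), Measurable (Fm n y) := by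
    intro y
    unfold Fm
    apply ENNReal.measurable_ofReal.comp
    fun_prop
  calc (∫⁻ x, (∫⁻ y, Qker n x y * g y ∂volume) ∂gammaM1 n)
      = ∫⁻ x, rho n x * (∫⁻ y, Qker n x y * g y ∂volume) ∂volume := by
        rw [gammaM1_eq, lintegral_withDensity_eq_lintegral_mul_non_measurable _ hρmeas hρfin]
        rfl
    _ ≤ ∫⁻ x, ∫⁻ y, (ENNReal.ofReal (Real.exp 2) * v⁻¹ * cy y * Fm n y (x - y)) * g y
          ∂volume ∂volume := by
        apply lintegral_mono
        intro x
        dsimp only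
        rw [← lintegral_const_mul' (rho n x) _ (by unfold rho; exact ENNReal.ofReal_ne_top)]
        apply lintegral_mono
        intro y
        calc rho n x * (Qker n x y * g y) = (rho n x * Qker n x y) * g y :=
              (mul_assoc _ _ _).symm
          _ ≤ (ENNReal.ofReal (Real.exp 2) * v⁻¹ * cy y * Fm n y (x - y)) * g y :=
              mul_le_mul_left (qker_le hn x y) _
    _ = ∫⁻ y, ∫⁻ x, (ENNReal.ofReal (Real.exp 2) * v⁻¹ * cy y * Fm n y (x - y)) * g y
          ∂volume ∂volume := lintegral_lintegral_swap hmeasH.aemeasurable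
    _ ≤ ∫⁻ y, (C0 * Bn) * (cy y * g y) ∂volume := by
        apply lintegral_mono
        intro y
        have hre : ∀ x : EuclideanSpace ℝ (Fin n),
            (ENNReal.ofReal (Real.exp 2) * v⁻¹ * cy y * Fm n y (x - y)) * g y =
              (ENNReal.ofReal (Real.exp 2) * v⁻¹ * cy y * g y) * Fm n y (x - y) := by
          intro x; ring
        calc (∫⁻ x, (ENNReal.ofReal (Real.exp 2) * v⁻¹ * cy y * Fm n y (x - y)) * g y ∂volume)
            = (ENNReal.ofReal (Real.exp 2) * v⁻¹ * cy y * g y) *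
                ∫⁻ x, Fm n y (x - y) ∂volume := by
              simp_rw [hre]
              exact lintegral_const_mul _ ((hFymeas y).comp (by fun_prop))
          _ = (ENNReal.ofReal (Real.exp 2) * v⁻¹ * cy y * g y) * ∫⁻ u, Fm n y u ∂volume := by
              congr 1
              exact (measurePreserving_sub_right volume y).lintegral_comp (hFymeas y)
          _ ≤ (ENNReal.ofReal (Real.exp 2) * v⁻¹ * cy y * g y) * Bn :=
              mul_le_mul_right (hBndef ▸ Fm_integral_le hn y) _
          _ = (C0 * Bn) * (cy y * g y) := by rw [hC0def]; ring
    _ = (C0 * Bn) * ∫⁻ y, cy y * g y ∂volume :=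
        lintegral_const_mul' _ _ (ENNReal.mul_ne_top hC0top hBntop)
    _ ≤ (ENNReal.ofReal (T.toReal + 1) * ENNReal.ofReal ph) * ∫⁻ y, cy y * g y ∂volume :=
        mul_le_mul_left hkey _
    _ = ENNReal.ofReal (T.toReal + 1) * ∫⁻ y, g y ∂gammaM1 n := by
        rw [gammaM1_eq, lintegral_withDensity_eq_lintegral_mul _ hρmeas hg]
        rw [mul_assoc, ← lintegral_const_mul' _ _ hphtop]
        congr 1
        apply lintegral_congr
        intro y
        simp only [Pi.mul_apply, hcydef]
        unfold rho
        rw [← hphdef, ENNReal.ofReal_mul hph.le, mul_assoc]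
end

section
/- Let n ≥ 1. There exists C > 0 such that for every measurable g : ℝⁿ → [0,∞] and every x ∈ ℝⁿ: (i) sup_{0<r<min(1,1/|x|)} γ₋₁(B(x,r))^{−1} ∫_{B(x,r)} g(y) γ₋₁(y) dy ≤ C sup_{r>0} |B(x,r)|^{−1} ∫_{B(x,r)} g(y) dy, and (ii) sup_{r>0} |B(x,r)|^{−1} ∫_{B(x,r)} g(y) χ_N(x,y) dy ≤ C sup_{0<r<min(1,1/|x|)} γ₋₁(B(x,r))^{−1} ∫_{B(x,r)} g(y) γ₋₁(y) dy. -/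
open MeasureTheory Real
open scoped ENNReal

/-- The local part of the centered maximal function with respect to `γ₋₁`:
the supremum is over radii `0 < r < min(1, 1/|x|)`, i.e. `0 < r`, `r < 1`, `r·|x| < 1`. -/
noncomputable def maxGammaLoc (n : ℕ) (g : EuclideanSpace ℝ (Fin n) → ℝ≥0∞)
    (x : EuclideanSpace ℝ (Fin n)) : ℝ≥0∞ :=
  ⨆ (r : ℝ) (_ : 0 < r) (_ : r < 1) (_ : r * ‖x‖ < 1),
    (gammaM1 n (Metric.ball x r))⁻¹ * ∫⁻ y in Metric.ball x r, g y ∂gammaM1 n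

noncomputable def rho (n : ℕ) : EuclideanSpace ℝ (Fin n) → ℝ≥0∞ :=
  fun x => ENNReal.ofReal (Real.pi ^ ((n : ℝ) / 2) * Real.exp (‖x‖ ^ 2))

lemma rho_meas (n : ℕ) : Measurable (rho n) := by
  apply ENNReal.measurable_ofReal.comp
  fun_prop

lemma sq_bound {n : ℕ} {x y : EuclideanSpace ℝ (Fin n)} {r : ℝ}
    (hr1 : r ≤ 1) (hrx : r * ‖x‖ ≤ 1) (hy : y ∈ Metric.ball x r) :
    |‖y‖ ^ 2 - ‖x‖ ^ 2| ≤ 3 := by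
  rw [Metric.mem_ball, dist_eq_norm] at hy
  have h1 : |‖y‖ - ‖x‖| ≤ ‖y - x‖ := abs_norm_sub_norm_le y x
  have h2 : ‖y‖ ≤ ‖x‖ + ‖y - x‖ := norm_le_insert' y x
  have hr0 : 0 < r := lt_of_le_of_lt (norm_nonneg _) hy
  have hxn : 0 ≤ ‖x‖ := norm_nonneg x
  have hyn : 0 ≤ ‖y‖ := norm_nonneg y
  have hd : 0 ≤ ‖y - x‖ := norm_nonneg _
  have key : ‖y‖ ^ 2 - ‖x‖ ^ 2 = (‖y‖ - ‖x‖) * (‖y‖ + ‖x‖) := by ring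
  rw [key, abs_mul]
  have h3 : |‖y‖ + ‖x‖| = ‖y‖ + ‖x‖ := abs_of_nonneg (by linarith)
  rw [h3]
  have h4 : |‖y‖ - ‖x‖| ≤ r := le_of_lt (lt_of_le_of_lt h1 hy)
  have h5 : ‖y‖ + ‖x‖ ≤ 2 * ‖x‖ + r := by linarith
  have h6 : |‖y‖ - ‖x‖| * (‖y‖ + ‖x‖) ≤ r * (2 * ‖x‖ + r) :=
    mul_le_mul h4 h5 (by linarith) (le_of_lt hr0)
  nlinarith [abs_nonneg (‖y‖ - ‖x‖)]

lemma avg_comp (n : ℕ) (g : EuclideanSpace ℝ (Fin n) → ℝ≥0∞) (hg : Measurable g)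
    (x : EuclideanSpace ℝ (Fin n)) {r : ℝ}
    (hr0 : 0 < r) (hr1 : r ≤ 1) (hrx : r * ‖x‖ ≤ 1) :
    ((gammaM1 n (Metric.ball x r))⁻¹ * ∫⁻ y in Metric.ball x r, g y ∂gammaM1 n
      ≤ ENNReal.ofReal (Real.exp 6) *
        ((volume (Metric.ball x r))⁻¹ * ∫⁻ y in Metric.ball x r, g y ∂volume)) ∧
    ((volume (Metric.ball x r))⁻¹ * ∫⁻ y in Metric.ball x r, g y ∂volume
      ≤ ENNReal.ofReal (Real.exp 6) *
        ((gammaM1 n (Metric.ball x r))⁻¹ * ∫⁻ y in Metric.ball x r, g y ∂gammaM1 n)) := by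
  set P : ℝ := Real.pi ^ ((n : ℝ) / 2) with hPdef
  have hP : 0 < P := by positivity
  set B := Metric.ball x r with hBdef
  have hB : MeasurableSet B := Metric.isOpen_ball.measurableSet
  set m : ℝ≥0∞ := ENNReal.ofReal (P * Real.exp (‖x‖ ^ 2 - 3)) with hmdef
  set M : ℝ≥0∞ := ENNReal.ofReal (P * Real.exp (‖x‖ ^ 2 + 3)) with hMdef
  have hm0 : m ≠ 0 := by
    simp only [hmdef, ne_eq, ENNReal.ofReal_eq_zero, not_le]
    positivity
  have hmtop : m ≠ ⊤ := ENNReal.ofReal_ne_top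
  have hM0 : M ≠ 0 := by
    simp only [hMdef, ne_eq, ENNReal.ofReal_eq_zero, not_le]
    positivity
  have hMtop : M ≠ ⊤ := ENNReal.ofReal_ne_top
  have hvol0 : volume B ≠ 0 := (Metric.measure_ball_pos volume x hr0).ne'
  have hvoltop : volume B ≠ ⊤ := (measure_ball_lt_top).ne
  have hρlo : ∀ y ∈ B, m ≤ rho n y := by
    intro y hy
    apply ENNReal.ofReal_le_ofReal
    have := (abs_le.mp (sq_bound hr1 hrx hy)).1
    exact mul_le_mul_of_nonneg_left (Real.exp_le_exp.mpr (by linarith)) hP.le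
  have hρhi : ∀ y ∈ B, rho n y ≤ M := by
    intro y hy
    apply ENNReal.ofReal_le_ofReal
    have := (abs_le.mp (sq_bound hr1 hrx hy)).2
    exact mul_le_mul_of_nonneg_left (Real.exp_le_exp.mpr (by linarith)) hP.le
  have hγB : gammaM1 n B = ∫⁻ y in B, rho n y ∂volume := withDensity_apply _ hB
  have h1 : m * volume B ≤ gammaM1 n B := by
    rw [hγB, ← setLIntegral_const B m]
    exact setLIntegral_mono (rho_meas n) hρlo
  have h2 : gammaM1 n B ≤ M * volume B := by
    rw [hγB, ← setLIntegral_const B M]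
    exact setLIntegral_mono measurable_const hρhi
  have hint : ∫⁻ y in B, g y ∂gammaM1 n = ∫⁻ y in B, rho n y * g y ∂volume := by
    show ∫⁻ y in B, g y ∂(volume.withDensity (rho n)) = _
    rw [restrict_withDensity hB, lintegral_withDensity_eq_lintegral_mul _ (rho_meas n) hg]
    rfl
  have h3 : ∫⁻ y in B, g y ∂gammaM1 n ≤ M * ∫⁻ y in B, g y ∂volume := by
    rw [hint, ← lintegral_const_mul M hg]
    exact setLIntegral_mono (hg.const_mul M) fun y hy => mul_le_mul_left (hρhi y hy) _
  have h4 : m * ∫⁻ y in B, g y ∂volume ≤ ∫⁻ y in B, g y ∂gammaM1 n := by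
    rw [hint, ← lintegral_const_mul m hg]
    exact setLIntegral_mono ((rho_meas n).mul hg) fun y hy => mul_le_mul_left (hρlo y hy) _
  have key : m⁻¹ * M = ENNReal.ofReal (Real.exp 6) := by
    have hinv : m⁻¹ = ENNReal.ofReal ((P * Real.exp (‖x‖ ^ 2 - 3))⁻¹) := by
      rw [hmdef, ← ENNReal.ofReal_inv_of_pos (by positivity)]
    rw [hinv, hMdef, ← ENNReal.ofReal_mul (by positivity)]
    congr 1
    have e1 : Real.exp (‖x‖ ^ 2 - 3) = Real.exp (‖x‖ ^ 2) / Real.exp 3 := Real.exp_sub _ _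
    have e2 : Real.exp (‖x‖ ^ 2 + 3) = Real.exp (‖x‖ ^ 2) * Real.exp 3 := Real.exp_add _ _
    have e3 : Real.exp 6 = Real.exp 3 * Real.exp 3 := by
      rw [← Real.exp_add]; norm_num
    have h0 : Real.exp (‖x‖ ^ 2) ≠ 0 := (Real.exp_pos _).ne'
    have h0' : Real.exp 3 ≠ 0 := (Real.exp_pos _).ne'
    rw [e1, e2, e3]
    field_simp
  constructor
  · calc (gammaM1 n B)⁻¹ * ∫⁻ y in B, g y ∂gammaM1 n
        ≤ (m * volume B)⁻¹ * (M * ∫⁻ y in B, g y ∂volume) :=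
          mul_le_mul' (ENNReal.inv_le_inv.mpr h1) h3
      _ = (m⁻¹ * M) * ((volume B)⁻¹ * ∫⁻ y in B, g y ∂volume) := by
          rw [ENNReal.mul_inv (Or.inl hm0) (Or.inl hmtop)]; ring
      _ = ENNReal.ofReal (Real.exp 6) * ((volume B)⁻¹ * ∫⁻ y in B, g y ∂volume) := by
          rw [key]
  · have hb1 : (volume B)⁻¹ ≤ M * (gammaM1 n B)⁻¹ := by
      have h := ENNReal.inv_le_inv.mpr h2
      rw [ENNReal.mul_inv (Or.inl hM0) (Or.inl hMtop)] at h
      calc (volume B)⁻¹ = M * (M⁻¹ * (volume B)⁻¹) := by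
            rw [← mul_assoc, ENNReal.mul_inv_cancel hM0 hMtop, one_mul]
        _ ≤ M * (gammaM1 n B)⁻¹ := mul_le_mul_right h M
    have hb2 : ∫⁻ y in B, g y ∂volume ≤ m⁻¹ * ∫⁻ y in B, g y ∂gammaM1 n := by
      calc ∫⁻ y in B, g y ∂volume = m⁻¹ * (m * ∫⁻ y in B, g y ∂volume) := by
            rw [← mul_assoc, ENNReal.inv_mul_cancel hm0 hmtop, one_mul]
        _ ≤ m⁻¹ * ∫⁻ y in B, g y ∂gammaM1 n := mul_le_mul_right h4 _
    calc (volume B)⁻¹ * ∫⁻ y in B, g y ∂volume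
        ≤ (M * (gammaM1 n B)⁻¹) * (m⁻¹ * ∫⁻ y in B, g y ∂gammaM1 n) := mul_le_mul' hb1 hb2
      _ = (m⁻¹ * M) * ((gammaM1 n B)⁻¹ * ∫⁻ y in B, g y ∂gammaM1 n) := by ring
      _ = ENNReal.ofReal (Real.exp 6) * ((gammaM1 n B)⁻¹ * ∫⁻ y in B, g y ∂gammaM1 n) := by
          rw [key]

/-- Pointwise comparison between the local part of the `γ₋₁`-maximal
function and the (local part of the) Lebesgue centered Hardy–Littlewood maximal function. -/
theorem stmt5 (n : ℕ) (hn : 1 ≤ n) :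
    ∃ C : ℝ, 0 < C ∧ ∀ g : EuclideanSpace ℝ (Fin n) → ℝ≥0∞, Measurable g →
      ∀ x : EuclideanSpace ℝ (Fin n),
      (maxGammaLoc n g x
          ≤ ENNReal.ofReal C *
            ⨆ (r : ℝ) (_ : 0 < r),
              (volume (Metric.ball x r))⁻¹ * ∫⁻ y in Metric.ball x r, g y ∂volume) ∧
      ((⨆ (r : ℝ) (_ : 0 < r), (volume (Metric.ball x r))⁻¹ *
            ∫⁻ y in Metric.ball x r,
              Set.indicator (localN n) (fun _ => (1 : ℝ≥0∞)) (x, y) * g y ∂volume)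
          ≤ ENNReal.ofReal C * maxGammaLoc n g x) := by
  haveI : Nonempty (Fin n) := ⟨⟨0, hn⟩⟩
  haveI : Nontrivial (EuclideanSpace ℝ (Fin n)) := by
    refine ⟨0, EuclideanSpace.single (⟨0, hn⟩ : Fin n) (1 : ℝ), fun h => ?_⟩
    have := congrArg norm h
    rw [norm_zero, EuclideanSpace.norm_single] at this
    norm_num at this
  refine ⟨Real.exp 6, Real.exp_pos 6, fun g hg x => ⟨?_, ?_⟩⟩
  · -- part (i)
    refine iSup_le fun r => iSup_le fun hr0 => iSup_le fun hr1 => iSup_le fun hrx => ?_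
    refine ((avg_comp n g hg x hr0 hr1.le hrx.le).1).trans (mul_le_mul_right ?_ _)
    exact le_iSup_of_le r (le_iSup_of_le hr0 le_rfl)
  · -- part (ii)
    refine iSup_le fun r => iSup_le fun hr0 => ?_
    set R : ℝ := if ‖x‖ ≤ 1 then 1 else ‖x‖⁻¹ with hRdef
    have hR0 : 0 < R := by
      rw [hRdef]; split_ifs with h
      · norm_num
      · exact inv_pos.mpr (by linarith)
    have hR1 : R ≤ 1 := by
      rw [hRdef]; split_ifs with h
      · exact le_refl 1
      · exact le_of_lt (inv_lt_one_of_one_lt₀ (by linarith))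
    have hmemN : ∀ y : EuclideanSpace ℝ (Fin n), (x, y) ∈ localN n → dist y x ≤ R := by
      intro y hy
      obtain ⟨h1, h2⟩ := hy
      rw [dist_eq_norm, ← norm_sub_rev]
      rw [hRdef]; split_ifs with h
      · exact h1
      · have hx0 : 0 < ‖x‖ := by linarith
        rw [← le_div_iff₀ hx0] at h2
        calc ‖x - y‖ ≤ 1 / ‖x‖ := h2
          _ = ‖x‖⁻¹ := one_div _
    set s : ℝ := min r R with hsdef
    have hs0 : 0 < s := lt_min hr0 hR0
    have hsr : s ≤ r := min_le_left _ _
    have hsR : s ≤ R := min_le_right _ _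
    have hs1 : s ≤ 1 := hsR.trans hR1
    have hsx : s * ‖x‖ ≤ 1 := by
      by_cases h : ‖x‖ ≤ 1
      · calc s * ‖x‖ ≤ 1 * 1 := mul_le_mul hs1 h (norm_nonneg x) one_pos.le
          _ = 1 := one_mul 1
      · push_neg at h
        have hx0 : 0 < ‖x‖ := by linarith
        have : R = ‖x‖⁻¹ := by rw [hRdef, if_neg (not_le.mpr h)]
        calc s * ‖x‖ ≤ ‖x‖⁻¹ * ‖x‖ := mul_le_mul_of_nonneg_right (this ▸ hsR) (norm_nonneg x)
          _ = 1 := inv_mul_cancel₀ hx0.ne'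
    set μg := volume.withDensity g with hμgdef
    -- Step 1 : integral bound
    have step1 : (∫⁻ y in Metric.ball x r,
        Set.indicator (localN n) (fun _ => (1 : ℝ≥0∞)) (x, y) * g y ∂volume)
        ≤ μg (Metric.closedBall x s) := by
      have hptwise : ∀ y, (Metric.ball x r).indicator
          (fun y => Set.indicator (localN n) (fun _ => (1 : ℝ≥0∞)) (x, y) * g y) y
          ≤ (Metric.closedBall x s).indicator g y := by
        intro y
        by_cases hyr : y ∈ Metric.ball x r
        · rw [Set.indicator_of_mem hyr]
          by_cases hyN : (x, y) ∈ localN n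
          · rw [Set.indicator_of_mem hyN, one_mul]
            have hycb : y ∈ Metric.closedBall x s := by
              rw [Metric.mem_closedBall]
              exact le_min (Metric.mem_ball.mp hyr).le (hmemN y hyN)
            rw [Set.indicator_of_mem hycb]
          · rw [Set.indicator_of_notMem hyN, zero_mul]
            exact zero_le
        · rw [Set.indicator_of_notMem hyr]
          exact zero_le
      calc (∫⁻ y in Metric.ball x r,
            Set.indicator (localN n) (fun _ => (1 : ℝ≥0∞)) (x, y) * g y ∂volume)
          = ∫⁻ y, (Metric.ball x r).indicator
              (fun y => Set.indicator (localN n) (fun _ => (1 : ℝ≥0∞)) (x, y) * g y) y ∂volume :=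
            (lintegral_indicator Metric.isOpen_ball.measurableSet _).symm
        _ ≤ ∫⁻ y, (Metric.closedBall x s).indicator g y ∂volume := lintegral_mono hptwise
        _ = ∫⁻ y in Metric.closedBall x s, g y ∂volume :=
            lintegral_indicator measurableSet_closedBall _
        _ = μg (Metric.closedBall x s) := (withDensity_apply g measurableSet_closedBall).symm
    -- Step 2 : closed ball to open ball
    have hsphere : μg (Metric.sphere x s) = 0 :=
      withDensity_absolutelyContinuous volume g (Measure.addHaar_sphere volume x s)
    have step2 : μg (Metric.closedBall x s) ≤ μg (Metric.ball x s) := by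
      calc μg (Metric.closedBall x s) = μg (Metric.ball x s ∪ Metric.sphere x s) := by
            rw [Metric.ball_union_sphere]
        _ ≤ μg (Metric.ball x s) + μg (Metric.sphere x s) := measure_union_le _ _
        _ = μg (Metric.ball x s) := by rw [hsphere, add_zero]
    -- Step 3 : exhaust open ball by smaller balls
    set c : ℕ → ℝ := fun k => s * ((k + 1) / (k + 2)) with hcdef
    have hck0 : ∀ k, 0 < c k := by
      intro k
      apply mul_pos hs0
      positivity
    have hfrac : ∀ k : ℕ, ((k : ℝ) + 1) / ((k : ℝ) + 2) < 1 := by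
      intro k
      rw [div_lt_one (by positivity)]
      linarith
    have hcks : ∀ k, c k < s := by
      intro k
      calc c k = s * ((k + 1) / (k + 2)) := rfl
        _ < s * 1 := by
            apply mul_lt_mul_of_pos_left (hfrac k) hs0
        _ = s := mul_one s
    have hmono : Monotone fun k => Metric.ball x (c k) := by
      intro a b hab
      apply Metric.ball_subset_ball
      apply mul_le_mul_of_nonneg_left _ hs0.le
      rw [div_le_div_iff₀ (by positivity) (by positivity)]
      have : (a : ℝ) ≤ b := Nat.cast_le.mpr hab
      nlinarith
    have hunion : (⋃ k, Metric.ball x (c k)) = Metric.ball x s := by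
      ext y
      simp only [Set.mem_iUnion, Metric.mem_ball]
      constructor
      · rintro ⟨k, hk⟩
        exact hk.trans (hcks k)
      · intro hy
        set d := dist y x with hddef
        have hd0 : 0 ≤ d := dist_nonneg
        obtain ⟨k, hk⟩ := exists_nat_gt ((2 * d - s) / (s - d))
        refine ⟨k, ?_⟩
        have hsd : 0 < s - d := by linarith
        rw [div_lt_iff₀ hsd] at hk
        have h2 : (0:ℝ) < (k : ℝ) + 2 := by positivity
        rw [hcdef]
        show d < s * ((k + 1) / (k + 2))
        rw [mul_div_assoc', lt_div_iff₀ h2]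
        nlinarith
    have hμunion : μg (Metric.ball x s) = ⨆ k, μg (Metric.ball x (c k)) := by
      rw [← hunion]
      exact hmono.measure_iUnion
    -- Step 4 : each small ball term is controlled
    have step4 : ∀ k, (volume (Metric.ball x r))⁻¹ * μg (Metric.ball x (c k))
        ≤ ENNReal.ofReal (Real.exp 6) * maxGammaLoc n g x := by
      intro k
      have hck1 : c k < 1 := (hcks k).trans_le hs1
      have hckx : c k * ‖x‖ < 1 := by
        by_cases h : ‖x‖ = 0
        · rw [h, mul_zero]; norm_num
        · have hx0 : 0 < ‖x‖ := lt_of_le_of_ne (norm_nonneg x) (Ne.symm h)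
          calc c k * ‖x‖ < s * ‖x‖ := mul_lt_mul_of_pos_right (hcks k) hx0
            _ ≤ 1 := hsx
      have hle1 : (volume (Metric.ball x r))⁻¹ * μg (Metric.ball x (c k))
          ≤ (volume (Metric.ball x (c k)))⁻¹ * μg (Metric.ball x (c k)) := by
        apply mul_le_mul_left
        apply ENNReal.inv_le_inv.mpr
        exact measure_mono (Metric.ball_subset_ball ((hcks k).le.trans hsr))
      have heq : μg (Metric.ball x (c k)) = ∫⁻ y in Metric.ball x (c k), g y ∂volume :=
        withDensity_apply g Metric.isOpen_ball.measurableSet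
      refine hle1.trans ?_
      rw [heq]
      refine ((avg_comp n g hg x (hck0 k) hck1.le hckx.le).2).trans (mul_le_mul_right ?_ _)
      exact le_iSup_of_le (c k) (le_iSup_of_le (hck0 k) (le_iSup_of_le hck1
        (le_iSup_of_le hckx le_rfl)))
    -- Assemble
    calc (volume (Metric.ball x r))⁻¹ *
          ∫⁻ y in Metric.ball x r,
            Set.indicator (localN n) (fun _ => (1 : ℝ≥0∞)) (x, y) * g y ∂volume
        ≤ (volume (Metric.ball x r))⁻¹ * μg (Metric.ball x s) :=
          mul_le_mul_right (step1.trans step2) _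
      _ = ⨆ k, (volume (Metric.ball x r))⁻¹ * μg (Metric.ball x (c k)) := by
          rw [hμunion, ENNReal.mul_iSup]
      _ ≤ ENNReal.ofReal (Real.exp 6) * maxGammaLoc n g x := iSup_le step4
end

section
/- Let n ≥ 1. The centered Hardy–Littlewood maximal operator with respect to the inverse Gaussian measure, M_{γ₋₁}g(x) = sup_{r>0} γ₋₁(B(x,r))^{−1} ∫_{B(x,r)} |g(y)| γ₋₁(y) dy, is of weak type (1,1) with respect to γ₋₁: there exists C > 0 such that for every g ∈ L¹(ℝⁿ, γ₋₁) and every λ > 0, γ₋₁({x ∈ ℝⁿ : M_{γ₋₁}g(x) > λ}) ≤ C λ^{−1} ∫_{ℝⁿ} |g(y)| γ₋₁(y) dy. -/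
open MeasureTheory Real
open scoped ENNReal

lemma gammaM1_density_measurable (n : ℕ) :
    Measurable fun x : EuclideanSpace ℝ (Fin n) =>
      ENNReal.ofReal (Real.pi ^ ((n : ℝ) / 2) * Real.exp (‖x‖ ^ 2)) := by
  fun_prop

/-- Lower bound for the inverse Gaussian measure of a ball. -/
lemma gammaM1_ball_lower (n : ℕ) (x : EuclideanSpace ℝ (Fin n)) (r : ℝ) :
    ENNReal.ofReal (Real.pi ^ ((n : ℝ) / 2)) * volume (Metric.ball x r)
      ≤ gammaM1 n (Metric.ball x r) := by
  rw [gammaM1, withDensity_apply _ measurableSet_ball]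
  calc ENNReal.ofReal (Real.pi ^ ((n : ℝ) / 2)) * volume (Metric.ball x r)
      = ∫⁻ _ in Metric.ball x r, ENNReal.ofReal (Real.pi ^ ((n : ℝ) / 2)) := by
        rw [setLIntegral_const, mul_comm]
    _ ≤ ∫⁻ y in Metric.ball x r,
          ENNReal.ofReal (Real.pi ^ ((n : ℝ) / 2) * Real.exp (‖y‖ ^ 2)) := by
        refine lintegral_mono fun y => ENNReal.ofReal_le_ofReal ?_
        nlinarith [Real.one_le_exp (by positivity : (0:ℝ) ≤ ‖y‖ ^ 2),
          Real.rpow_nonneg Real.pi_pos.le ((n : ℝ) / 2),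
          Real.rpow_natCast Real.pi n]

/-- The centered Hardy–Littlewood maximal operator with respect to `γ₋₁`
is of weak type (1,1) with respect to `γ₋₁`. -/
theorem stmt6 (n : ℕ) (hn : 1 ≤ n) :
    ∃ C : ℝ, 0 < C ∧ ∀ g : EuclideanSpace ℝ (Fin n) → ℝ, Integrable g (gammaM1 n) →
      ∀ lam : ℝ, 0 < lam →
      gammaM1 n {x | ENNReal.ofReal lam < ⨆ (r : ℝ) (_ : 0 < r),
          (gammaM1 n (Metric.ball x r))⁻¹ *
            ∫⁻ y in Metric.ball x r, ENNReal.ofReal |g y| ∂gammaM1 n}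
        ≤ ENNReal.ofReal (C / lam) * ∫⁻ y, ENNReal.ofReal |g y| ∂gammaM1 n := by
  classical
  obtain ⟨N, τ, hτ, hN⟩ :=
    HasBesicovitchCovering.no_satelliteConfig (α := EuclideanSpace ℝ (Fin n))
  refine ⟨max N 1, by positivity, ?_⟩
  intro g hg lam hlam
  set γ := gammaM1 n with hγdef
  set I := ∫⁻ y, ENNReal.ofReal |g y| ∂γ with hIdef
  have hlam' : (0:ℝ≥0∞) < ENNReal.ofReal lam := ENNReal.ofReal_pos.2 hlam
  have hI : I ≠ ∞ := by
    have h2 : (∫⁻ y, (‖g y‖₊ : ℝ≥0∞) ∂γ) < ∞ := hg.2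
    have : I = ∫⁻ y, (‖g y‖₊ : ℝ≥0∞) ∂γ := by
      refine lintegral_congr fun y => ?_
      rw [← Real.norm_eq_abs]; exact ofReal_norm (g y)
    rw [this]
    exact h2.ne
  set s := {x : EuclideanSpace ℝ (Fin n) | ENNReal.ofReal lam < ⨆ (r : ℝ) (_ : 0 < r),
      (γ (Metric.ball x r))⁻¹ *
        ∫⁻ y in Metric.ball x r, ENNReal.ofReal |g y| ∂γ} with hsdef
  -- every point of s has a good ball
  have key : ∀ x ∈ s, ∃ r, 0 < r ∧
      γ (Metric.ball x r) * ENNReal.ofReal lam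
        ≤ ∫⁻ y in Metric.ball x r, ENNReal.ofReal |g y| ∂γ := by
    intro x hx
    rw [hsdef, Set.mem_setOf_eq, lt_iSup_iff] at hx
    obtain ⟨r, hx⟩ := hx
    rw [lt_iSup_iff] at hx
    obtain ⟨hr, hx⟩ := hx
    refine ⟨r, hr, ?_⟩
    have hint : (∫⁻ y in Metric.ball x r, ENNReal.ofReal |g y| ∂γ) ≤ I :=
      setLIntegral_le_lintegral _ _
    by_cases hB0 : γ (Metric.ball x r) = 0
    · simp [hB0]
    have hBtop : γ (Metric.ball x r) ≠ ∞ := by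
      intro h
      rw [h, ENNReal.inv_top, zero_mul] at hx
      exact absurd hx (not_lt.2 bot_le)
    calc γ (Metric.ball x r) * ENNReal.ofReal lam
        ≤ γ (Metric.ball x r) * ((γ (Metric.ball x r))⁻¹ *
            ∫⁻ y in Metric.ball x r, ENNReal.ofReal |g y| ∂γ) :=
          mul_le_mul_right hx.le _
      _ = ∫⁻ y in Metric.ball x r, ENNReal.ofReal |g y| ∂γ := by
          rw [← mul_assoc, ENNReal.mul_inv_cancel hB0 hBtop, one_mul]
  -- choose radii
  choose! rad hradpos hradle using key
  -- constants
  set c : ℝ≥0∞ := ENNReal.ofReal (Real.pi ^ ((n : ℝ) / 2)) *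
    volume (Metric.ball (0 : EuclideanSpace ℝ (Fin n)) 1) with hcdef
  have hc0 : c ≠ 0 := by
    apply mul_ne_zero
    · simp only [ne_eq, ENNReal.ofReal_eq_zero, not_le]
      positivity
    · exact (Metric.measure_ball_pos _ _ one_pos).ne'
  have hctop : c ≠ ∞ :=
    ENNReal.mul_ne_top ENNReal.ofReal_ne_top measure_ball_lt_top.ne
  set K : ℝ≥0∞ := I / (c * ENNReal.ofReal lam) with hKdef
  have hKtop : K ≠ ∞ := by
    rw [hKdef]
    exact (ENNReal.div_lt_top hI (mul_ne_zero hc0 hlam'.ne')).ne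
  set R : ℝ := K.toReal ^ ((n : ℝ)⁻¹) with hRdef
  -- the radii are bounded
  have hrad_bound : ∀ x ∈ s, rad x ≤ R := by
    intro x hx
    have hrpos := hradpos x hx
    have hle := hradle x hx
    have hvol : c * ENNReal.ofReal (rad x ^ n) ≤ γ (Metric.ball x (rad x)) := by
      have hball : volume (Metric.ball x (rad x)) =
          ENNReal.ofReal (rad x ^ n) *
            volume (Metric.ball (0 : EuclideanSpace ℝ (Fin n)) 1) := by
        rw [Measure.addHaar_ball_of_pos _ _ hrpos, finrank_euclideanSpace_fin]
      calc c * ENNReal.ofReal (rad x ^ n)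
          = ENNReal.ofReal (Real.pi ^ ((n : ℝ) / 2)) * volume (Metric.ball x (rad x)) := by
            rw [hball, hcdef]; ring
        _ ≤ γ (Metric.ball x (rad x)) := gammaM1_ball_lower n x (rad x)
    have h1 : c * ENNReal.ofReal (rad x ^ n) * ENNReal.ofReal lam ≤ I :=
      le_trans (mul_le_mul_left hvol _) (le_trans (hradle x hx)
        (setLIntegral_le_lintegral _ _))
    have h2 : ENNReal.ofReal (rad x ^ n) ≤ K := by
      rw [hKdef, ENNReal.le_div_iff_mul_le (Or.inl (mul_ne_zero hc0 hlam'.ne'))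
        (Or.inl (ENNReal.mul_ne_top hctop ENNReal.ofReal_ne_top))]
      calc ENNReal.ofReal (rad x ^ n) * (c * ENNReal.ofReal lam)
          = c * ENNReal.ofReal (rad x ^ n) * ENNReal.ofReal lam := by ring
        _ ≤ I := h1
    have h3 : rad x ^ n ≤ K.toReal := by
      rw [← ENNReal.ofReal_le_iff_le_toReal hKtop] at *
      exact h2
    have h4 : ((rad x) ^ n : ℝ) ^ ((n : ℝ)⁻¹) ≤ K.toReal ^ ((n : ℝ)⁻¹) :=
      Real.rpow_le_rpow (by positivity) h3 (by positivity)
    have hn0 : (n : ℝ) ≠ 0 := by exact_mod_cast Nat.one_le_iff_ne_zero.mp hn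
    rwa [← Real.rpow_natCast (rad x) n, ← Real.rpow_mul hrpos.le,
      mul_inv_cancel₀ hn0, Real.rpow_one] at h4
  -- Besicovitch covering
  let q : Besicovitch.BallPackage ↥s (EuclideanSpace ℝ (Fin n)) :=
    { c := fun x => x.1
      r := fun x => rad x.1
      rpos := fun x => hradpos x.1 x.2
      r_bound := R
      r_le := fun x => hrad_bound x.1 x.2 }
  obtain ⟨F, hFdisj, hFcov⟩ := Besicovitch.exist_disjoint_covering_families hτ hN q
  -- per-family estimate
  have hfam : ∀ i : Fin N,
      γ (⋃ j ∈ F i, Metric.ball (q.c j) (q.r j)) ≤ K * (c * ENNReal.ofReal lam) / ENNReal.ofReal lam := by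
    intro i
    -- reduce to a countable subfamily
    obtain ⟨T, hTc, hTU⟩ := TopologicalSpace.isOpen_iUnion_countable
      (fun j : ↥(F i) => Metric.ball (q.c j.1) (q.r j.1)) (fun j => Metric.isOpen_ball)
    have hTcount : Countable ↥T := hTc.to_subtype
    have hUeq : (⋃ j ∈ F i, Metric.ball (q.c j) (q.r j))
        = ⋃ j : ↥T, Metric.ball (q.c j.1.1) (q.r j.1.1) := by
      rw [Set.biUnion_eq_iUnion, ← hTU, Set.biUnion_eq_iUnion]
    have hdisj : Pairwise (Function.onFun Disjoint
        fun j : ↥T => Metric.ball (q.c j.1.1) (q.r j.1.1)) := by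
      intro j k hjk
      have h1 : (j.1.1 : ↥s) ≠ k.1.1 := by
        intro h
        exact hjk (Subtype.ext (Subtype.ext h))
      exact Disjoint.mono Metric.ball_subset_closedBall Metric.ball_subset_closedBall
        (hFdisj i j.1.2 k.1.2 h1)
    calc γ (⋃ j ∈ F i, Metric.ball (q.c j) (q.r j))
        = γ (⋃ j : ↥T, Metric.ball (q.c j.1.1) (q.r j.1.1)) := by rw [hUeq]
      _ ≤ ∑' j : ↥T, γ (Metric.ball (q.c j.1.1) (q.r j.1.1)) := measure_iUnion_le _
      _ ≤ ∑' j : ↥T, (∫⁻ y in Metric.ball (q.c j.1.1) (q.r j.1.1),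
            ENNReal.ofReal |g y| ∂γ) / ENNReal.ofReal lam := by
          refine ENNReal.tsum_le_tsum fun j => ?_
          rw [ENNReal.le_div_iff_mul_le (Or.inl hlam'.ne') (Or.inl ENNReal.ofReal_ne_top)]
          exact hradle j.1.1.1 j.1.1.2
      _ = (∑' j : ↥T, ∫⁻ y in Metric.ball (q.c j.1.1) (q.r j.1.1),
            ENNReal.ofReal |g y| ∂γ) / ENNReal.ofReal lam := by
          simp_rw [div_eq_mul_inv, ENNReal.tsum_mul_right]
      _ = (∫⁻ y in ⋃ j : ↥T, Metric.ball (q.c j.1.1) (q.r j.1.1),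
            ENNReal.ofReal |g y| ∂γ) / ENNReal.ofReal lam := by
          rw [lintegral_iUnion (fun j => measurableSet_ball) hdisj]
      _ ≤ I / ENNReal.ofReal lam := by
          apply ENNReal.div_le_div_right
          exact setLIntegral_le_lintegral _ _
      _ = K * (c * ENNReal.ofReal lam) / ENNReal.ofReal lam := by
          rw [hKdef, ENNReal.div_mul_cancel (mul_ne_zero hc0 hlam'.ne')
            (ENNReal.mul_ne_top hctop ENNReal.ofReal_ne_top)]
  -- conclusion
  have hcov : s ⊆ ⋃ i : Fin N, ⋃ j ∈ F i, Metric.ball (q.c j) (q.r j) := by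
    intro x hx
    have : x ∈ Set.range q.c := ⟨⟨x, hx⟩, rfl⟩
    exact hFcov this
  have hKc : K * (c * ENNReal.ofReal lam) = I := by
    rw [hKdef, ENNReal.div_mul_cancel (mul_ne_zero hc0 hlam'.ne')
      (ENNReal.mul_ne_top hctop ENNReal.ofReal_ne_top)]
  calc γ s ≤ γ (⋃ i : Fin N, ⋃ j ∈ F i, Metric.ball (q.c j) (q.r j)) := measure_mono hcov
    _ ≤ ∑' i : Fin N, γ (⋃ j ∈ F i, Metric.ball (q.c j) (q.r j)) := measure_iUnion_le _
    _ ≤ ∑' _ : Fin N, K * (c * ENNReal.ofReal lam) / ENNReal.ofReal lam :=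
        ENNReal.tsum_le_tsum hfam
    _ = (N : ℝ≥0∞) * (I / ENNReal.ofReal lam) := by
        rw [hKc, tsum_fintype]
        simp [Finset.sum_const, mul_comm]
    _ ≤ ENNReal.ofReal (max (N:ℝ) 1) * (I / ENNReal.ofReal lam) := by
        apply mul_le_mul_left
        rw [← ENNReal.ofReal_natCast N]
        exact ENNReal.ofReal_le_ofReal (le_max_left _ _)
    _ = ENNReal.ofReal (max (N:ℝ) 1 / lam) * I := by
        rw [ENNReal.ofReal_div_of_pos hlam, div_eq_mul_inv, div_eq_mul_inv]
        ring
end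

section
/- Let n ≥ 1. Then sup_{x∈ℝⁿ} ∫_{ℝⁿ} (1 + |x|) |x − y|^{1−n} χ_N(x,y) dy < ∞ and sup_{y∈ℝⁿ} ∫_{ℝⁿ} (1 + |x|) |x − y|^{1−n} χ_N(x,y) dx < ∞. -/
open MeasureTheory Real
open scoped ENNReal

open Metric in
/-- Integral of `‖u‖^(1-n)` over a ball of radius `R` is `≲ R`. -/
lemma aux_ball_lintegral (n : ℕ) (hn : 1 ≤ n) (R : ℝ) (hR : 0 ≤ R) :
    ∫⁻ u in closedBall (0 : EuclideanSpace ℝ (Fin n)) R,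
      ENNReal.ofReal (‖u‖ ^ ((1 : ℝ) - n)) ∂volume
      ≤ ENNReal.ofReal R *
        (2 * (ENNReal.ofReal ((2 : ℝ) ^ ((n : ℝ) - 1)) *
          volume (ball (0 : EuclideanSpace ℝ (Fin n)) 1))) := by
  classical
  set E := EuclideanSpace ℝ (Fin n)
  have hfr : Module.finrank ℝ E = n := finrank_euclideanSpace_fin
  have hzero : volume ({0} : Set E) = 0 := by
    have h0 : (closedBall (0 : E) 0) = {0} := closedBall_zero
    have := Measure.addHaar_closedBall (μ := (volume : Measure E)) 0 (le_refl (0:ℝ))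
    rw [h0, hfr] at this
    rw [this, zero_pow (by omega)]
    simp
  rcases eq_or_lt_of_le hR with hR0 | hRpos
  · -- R = 0
    have : closedBall (0 : E) R = {0} := by rw [← hR0]; exact closedBall_zero
    rw [this, setLIntegral_measure_zero _ _ hzero]
    exact zero_le
  -- R > 0
  set g : E → ℝ≥0∞ := fun u => ENNReal.ofReal (‖u‖ ^ ((1 : ℝ) - n)) with hg
  set S : ℕ → Set E := fun k => {u | R * (1/2) ^ (k+1) < ‖u‖ ∧ ‖u‖ ≤ R * (1/2) ^ k} with hS
  have hcover : closedBall (0 : E) R ⊆ {0} ∪ ⋃ k, S k := by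
    intro u hu
    rcases eq_or_ne u 0 with rfl | hu0
    · exact Or.inl rfl
    have hun : 0 < ‖u‖ := norm_pos_iff.2 hu0
    have huR : ‖u‖ ≤ R := by simpa [mem_closedBall, dist_zero_right] using hu
    have hex : ∃ m, R * (1/2) ^ m < ‖u‖ := by
      obtain ⟨m, hm⟩ := exists_pow_lt_of_lt_one (div_pos hun hRpos) (by norm_num : (1:ℝ)/2 < 1)
      exact ⟨m, by rwa [← lt_div_iff₀' hRpos]⟩
    let k := Nat.find hex
    have hk : R * (1/2) ^ k < ‖u‖ := Nat.find_spec hex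
    have hk0 : k ≠ 0 := by
      intro h
      rw [h] at hk
      simp only [pow_zero, mul_one] at hk
      exact absurd huR (not_le.2 hk)
    obtain ⟨j, hj⟩ : ∃ j, k = j + 1 := ⟨k - 1, (Nat.succ_pred_eq_of_pos (Nat.pos_of_ne_zero hk0)).symm⟩
    have hjlt : ¬ (R * (1/2) ^ j < ‖u‖) := Nat.find_min hex (by omega)
    refine Or.inr (Set.mem_iUnion.2 ⟨j, ?_⟩)
    exact ⟨by rw [← hj]; exact hk, not_lt.1 hjlt⟩
  have hmain : ∀ k : ℕ, ∫⁻ u in S k, g u ∂volume ≤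
      ENNReal.ofReal R * ENNReal.ofReal ((1/2 : ℝ) ^ k) *
        (ENNReal.ofReal ((2 : ℝ) ^ ((n : ℝ) - 1)) * volume (ball (0 : E) 1)) := by
    intro k
    set a : ℝ := R * (1/2) ^ k with ha
    have hapos : 0 < a := by positivity
    have hbpos : 0 < R * (1/2) ^ (k+1) := by positivity
    have hb : R * (1/2) ^ (k+1) = a / 2 := by rw [ha]; ring
    have hstep1 : ∫⁻ u in S k, g u ∂volume ≤
        ENNReal.ofReal ((a/2) ^ ((1 : ℝ) - n)) * volume (S k) := by
      rw [← setLIntegral_const]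
      refine setLIntegral_mono measurable_const fun u hu => ?_
      refine ENNReal.ofReal_le_ofReal ?_
      refine Real.rpow_le_rpow_of_nonpos (by positivity) ?_ (by
        simp only [sub_nonpos]
        exact_mod_cast hn)
      rw [← hb]; exact le_of_lt hu.1
    have hSsub : S k ⊆ closedBall (0 : E) a := by
      intro u hu
      rw [mem_closedBall, dist_zero_right]
      exact hu.2
    have hvol : volume (S k) ≤ ENNReal.ofReal (a ^ n) * volume (ball (0 : E) 1) := by
      calc volume (S k) ≤ volume (closedBall (0 : E) a) := measure_mono hSsub
        _ = ENNReal.ofReal (a ^ n) * volume (ball (0 : E) 1) := by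
            rw [Measure.addHaar_closedBall (μ := (volume : Measure E)) 0 hapos.le, hfr]
    calc ∫⁻ u in S k, g u ∂volume
        ≤ ENNReal.ofReal ((a/2) ^ ((1 : ℝ) - n)) *
            (ENNReal.ofReal (a ^ n) * volume (ball (0 : E) 1)) := by
          exact hstep1.trans (mul_le_mul_right hvol _)
      _ = ENNReal.ofReal ((a/2) ^ ((1 : ℝ) - n) * a ^ n) * volume (ball (0 : E) 1) := by
          rw [← mul_assoc, ← ENNReal.ofReal_mul (by positivity)]
      _ = ENNReal.ofReal R * ENNReal.ofReal ((1/2 : ℝ) ^ k) *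
            (ENNReal.ofReal ((2 : ℝ) ^ ((n : ℝ) - 1)) * volume (ball (0 : E) 1)) := by
          have key : (a/2) ^ ((1 : ℝ) - n) * a ^ n = R * (1/2 : ℝ) ^ k * (2 : ℝ) ^ ((n : ℝ) - 1) := by
            have h2 : (a : ℝ) ^ n = a ^ (n : ℝ) := (Real.rpow_natCast a n).symm
            have h1 : (a/2) ^ ((1 : ℝ) - n) = a ^ ((1:ℝ) - n) * (2:ℝ) ^ ((n:ℝ) - 1) := by
              rw [Real.div_rpow hapos.le (by norm_num), div_eq_mul_inv,
                ← Real.rpow_neg (by norm_num), neg_sub]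
            have h3 : a ^ ((1:ℝ) - n) * a ^ (n:ℝ) = a := by
              rw [← Real.rpow_add hapos]; norm_num
            calc (a/2) ^ ((1 : ℝ) - n) * a ^ n
                = (a ^ ((1:ℝ) - n) * (2:ℝ) ^ ((n:ℝ) - 1)) * a ^ (n:ℝ) := by rw [h1, h2]
              _ = (a ^ ((1:ℝ) - n) * a ^ (n:ℝ)) * (2:ℝ) ^ ((n:ℝ) - 1) := by ring
              _ = a * (2:ℝ) ^ ((n:ℝ) - 1) := by rw [h3]
              _ = R * (1/2 : ℝ) ^ k * (2 : ℝ) ^ ((n:ℝ) - 1) := by rw [ha]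
          rw [key, ENNReal.ofReal_mul (by positivity), ENNReal.ofReal_mul (by positivity),
            mul_assoc]
    -- end calc
  calc ∫⁻ u in closedBall (0 : E) R, g u ∂volume
      ≤ ∫⁻ u in ({0} ∪ ⋃ k, S k : Set E), g u ∂volume := lintegral_mono_set hcover
    _ ≤ (∫⁻ u in ({0} : Set E), g u ∂volume) + ∫⁻ u in (⋃ k, S k), g u ∂volume :=
        lintegral_union_le _ _ _
    _ ≤ 0 + ∑' k, ∫⁻ u in S k, g u ∂volume := by
        gcongr
        · exact le_of_eq (setLIntegral_measure_zero _ _ hzero)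
        · exact lintegral_iUnion_le _ _
    _ ≤ ∑' k, ENNReal.ofReal R * ENNReal.ofReal ((1/2 : ℝ) ^ k) *
          (ENNReal.ofReal ((2 : ℝ) ^ ((n : ℝ) - 1)) * volume (ball (0 : E) 1)) := by
        rw [zero_add]; exact ENNReal.tsum_le_tsum hmain
    _ = (∑' k : ℕ, ENNReal.ofReal ((1/2 : ℝ) ^ k)) * (ENNReal.ofReal R *
          (ENNReal.ofReal ((2 : ℝ) ^ ((n : ℝ) - 1)) * volume (ball (0 : E) 1))) := by
        rw [ENNReal.tsum_mul_right, ENNReal.tsum_mul_left (a := ENNReal.ofReal R)]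
        ring
    _ = 2 * (ENNReal.ofReal R *
          (ENNReal.ofReal ((2 : ℝ) ^ ((n : ℝ) - 1)) * volume (ball (0 : E) 1))) := by
        congr 1
        have : ∀ k : ℕ, ENNReal.ofReal ((1/2 : ℝ) ^ k) = (2⁻¹ : ℝ≥0∞) ^ k := by
          intro k
          rw [ENNReal.ofReal_pow (by norm_num)]
          congr 1
          rw [one_div, ENNReal.ofReal_inv_of_pos (by norm_num)]
          simp
        simp_rw [this]
        rw [ENNReal.tsum_geometric, ENNReal.one_sub_inv_two]
        simp
    _ = ENNReal.ofReal R * (2 * (ENNReal.ofReal ((2 : ℝ) ^ ((n : ℝ) - 1)) *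
          volume (ball (0 : E) 1))) := by ring

/-- `sup_x ∫ (1+|x|)|x-y|^{1-n} χ_N(x,y) dy < ∞` and
`sup_y ∫ (1+|x|)|x-y|^{1-n} χ_N(x,y) dx < ∞`. -/
theorem stmt8 (n : ℕ) (hn : 1 ≤ n) :
    ∃ C : ℝ≥0∞, C ≠ ⊤ ∧
      (∀ x : EuclideanSpace ℝ (Fin n),
        (∫⁻ y, Set.indicator (localN n)
          (fun p => ENNReal.ofReal ((1 + ‖p.1‖) * ‖p.1 - p.2‖ ^ ((1 : ℝ) - n))) (x, y)
            ∂volume) ≤ C) ∧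
      (∀ y : EuclideanSpace ℝ (Fin n),
        (∫⁻ x, Set.indicator (localN n)
          (fun p => ENNReal.ofReal ((1 + ‖p.1‖) * ‖p.1 - p.2‖ ^ ((1 : ℝ) - n))) (x, y)
            ∂volume) ≤ C) := by
  classical
  set E := EuclideanSpace ℝ (Fin n)
  set g : E → ℝ≥0∞ := fun u => ENNReal.ofReal (‖u‖ ^ ((1 : ℝ) - n)) with hg
  have hgmeas : Measurable g := by
    apply ENNReal.measurable_ofReal.comp
    exact measurable_norm.pow measurable_const
  set K : ℝ≥0∞ := 2 * (ENNReal.ofReal ((2 : ℝ) ^ ((n : ℝ) - 1)) *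
    volume (Metric.ball (0 : E) 1)) with hK
  have hKfin : K ≠ ⊤ := by
    rw [hK]
    refine ENNReal.mul_ne_top (by norm_num) (ENNReal.mul_ne_top ENNReal.ofReal_ne_top ?_)
    exact measure_ball_lt_top.ne
  refine ⟨ENNReal.ofReal 6 * K, ENNReal.mul_ne_top ENNReal.ofReal_ne_top hKfin, ?_, ?_⟩
  · -- fixed x, integrate in y
    intro x
    have hx1 : (0:ℝ) < 1 + ‖x‖ := by positivity
    set Rx : ℝ := min 1 (2 / (1 + ‖x‖)) with hRx
    have hRxnn : 0 ≤ Rx := le_min (by norm_num) (by positivity)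
    have hpt : ∀ y : E, Set.indicator (localN n)
        (fun p => ENNReal.ofReal ((1 + ‖p.1‖) * ‖p.1 - p.2‖ ^ ((1 : ℝ) - n))) (x, y)
        ≤ ENNReal.ofReal (1 + ‖x‖) *
          Set.indicator (Metric.closedBall (0 : E) Rx) g (x - y) := by
      intro y
      by_cases hm : (x, y) ∈ localN n
      · obtain ⟨h1, h2⟩ := id hm
        simp only at h1 h2
        have hmem : x - y ∈ Metric.closedBall (0 : E) Rx := by
          rw [Metric.mem_closedBall, dist_zero_right]
          refine le_min h1 ?_
          rw [le_div_iff₀ hx1]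
          calc ‖x - y‖ * (1 + ‖x‖) = ‖x - y‖ + ‖x - y‖ * ‖x‖ := by ring
            _ ≤ 1 + 1 := add_le_add h1 h2
            _ = 2 := by norm_num
        rw [Set.indicator_of_mem hm, Set.indicator_of_mem hmem]
        rw [hg]
        rw [← ENNReal.ofReal_mul hx1.le]
      · rw [Set.indicator_of_notMem hm]
        exact zero_le
    calc ∫⁻ y, Set.indicator (localN n)
          (fun p => ENNReal.ofReal ((1 + ‖p.1‖) * ‖p.1 - p.2‖ ^ ((1 : ℝ) - n))) (x, y) ∂volume
        ≤ ∫⁻ y, ENNReal.ofReal (1 + ‖x‖) *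
            Set.indicator (Metric.closedBall (0 : E) Rx) g (x - y) ∂volume :=
          lintegral_mono hpt
      _ = ENNReal.ofReal (1 + ‖x‖) *
            ∫⁻ y, Set.indicator (Metric.closedBall (0 : E) Rx) g (x - y) ∂volume :=
          lintegral_const_mul' _ _ ENNReal.ofReal_ne_top
      _ = ENNReal.ofReal (1 + ‖x‖) *
            ∫⁻ u, Set.indicator (Metric.closedBall (0 : E) Rx) g u ∂volume := by
          congr 1
          have hmp : MeasurePreserving (fun t : E => x - t) volume volume := by
            simpa [Function.comp_def, sub_eq_add_neg] using
              (measurePreserving_add_left (volume : Measure E) x).comp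
                (Measure.measurePreserving_neg volume)
          exact hmp.lintegral_comp (hgmeas.indicator measurableSet_closedBall)
      _ = ENNReal.ofReal (1 + ‖x‖) *
            ∫⁻ u in Metric.closedBall (0 : E) Rx, g u ∂volume := by
          rw [lintegral_indicator measurableSet_closedBall]
      _ ≤ ENNReal.ofReal (1 + ‖x‖) * (ENNReal.ofReal Rx * K) := by
          gcongr
          exact aux_ball_lintegral n hn Rx hRxnn
      _ = ENNReal.ofReal ((1 + ‖x‖) * Rx) * K := by
          rw [← mul_assoc, ← ENNReal.ofReal_mul hx1.le]
      _ ≤ ENNReal.ofReal 6 * K := by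
          gcongr
          calc (1 + ‖x‖) * Rx ≤ (1 + ‖x‖) * (2 / (1 + ‖x‖)) :=
                mul_le_mul_of_nonneg_left (min_le_right _ _) hx1.le
            _ = 2 := by field_simp
            _ ≤ 6 := by norm_num
  · -- fixed y, integrate in x
    intro y
    have hy1 : (0:ℝ) < 1 + ‖y‖ := by positivity
    set Ry : ℝ := min 1 (3 / (1 + ‖y‖)) with hRy
    have hRynn : 0 ≤ Ry := le_min (by norm_num) (by positivity)
    have hpt : ∀ x : E, Set.indicator (localN n)
        (fun p => ENNReal.ofReal ((1 + ‖p.1‖) * ‖p.1 - p.2‖ ^ ((1 : ℝ) - n))) (x, y)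
        ≤ ENNReal.ofReal (2 * (1 + ‖y‖)) *
          Set.indicator (Metric.closedBall (0 : E) Ry) g (x - y) := by
      intro x
      by_cases hm : (x, y) ∈ localN n
      · obtain ⟨h1, h2⟩ := id hm
        simp only at h1 h2
        have hxy : ‖x‖ ≤ ‖y‖ + 1 := by
          calc ‖x‖ = ‖y + (x - y)‖ := by congr 1; abel
            _ ≤ ‖y‖ + ‖x - y‖ := norm_add_le _ _
            _ ≤ ‖y‖ + 1 := by linarith
        have hyx : ‖y‖ ≤ ‖x‖ + ‖x - y‖ := by
          calc ‖y‖ = ‖x - (x - y)‖ := by congr 1; abel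
            _ ≤ ‖x‖ + ‖x - y‖ := norm_sub_le _ _
        have hmem : x - y ∈ Metric.closedBall (0 : E) Ry := by
          rw [Metric.mem_closedBall, dist_zero_right]
          refine le_min h1 ?_
          rw [le_div_iff₀ hy1]
          have hq : ‖x - y‖ * ‖y‖ ≤ ‖x - y‖ * ‖x‖ + ‖x - y‖ * ‖x - y‖ := by
            calc ‖x - y‖ * ‖y‖ ≤ ‖x - y‖ * (‖x‖ + ‖x - y‖) :=
                  mul_le_mul_of_nonneg_left hyx (norm_nonneg _)
              _ = ‖x - y‖ * ‖x‖ + ‖x - y‖ * ‖x - y‖ := by ring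
          have hsq : ‖x - y‖ * ‖x - y‖ ≤ 1 := by
            calc ‖x - y‖ * ‖x - y‖ ≤ 1 * 1 :=
                  mul_le_mul h1 h1 (norm_nonneg _) (by norm_num)
              _ = 1 := by norm_num
          calc ‖x - y‖ * (1 + ‖y‖) = ‖x - y‖ + ‖x - y‖ * ‖y‖ := by ring
            _ ≤ 1 + (1 + 1) := by
                have := hq.trans (add_le_add h2 hsq)
                linarith
            _ = 3 := by norm_num
        rw [Set.indicator_of_mem hm, Set.indicator_of_mem hmem]
        rw [hg]
        rw [← ENNReal.ofReal_mul (by positivity)]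
        refine ENNReal.ofReal_le_ofReal ?_
        have hrp : 0 ≤ ‖x - y‖ ^ ((1 : ℝ) - n) := Real.rpow_nonneg (norm_nonneg _) _
        have : (1 + ‖x‖) ≤ 2 * (1 + ‖y‖) := by have h0 := norm_nonneg y; linarith
        exact mul_le_mul_of_nonneg_right this hrp
      · rw [Set.indicator_of_notMem hm]
        exact zero_le
    calc ∫⁻ x, Set.indicator (localN n)
          (fun p => ENNReal.ofReal ((1 + ‖p.1‖) * ‖p.1 - p.2‖ ^ ((1 : ℝ) - n))) (x, y) ∂volume
        ≤ ∫⁻ x, ENNReal.ofReal (2 * (1 + ‖y‖)) *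
            Set.indicator (Metric.closedBall (0 : E) Ry) g (x - y) ∂volume :=
          lintegral_mono hpt
      _ = ENNReal.ofReal (2 * (1 + ‖y‖)) *
            ∫⁻ x, Set.indicator (Metric.closedBall (0 : E) Ry) g (x - y) ∂volume :=
          lintegral_const_mul' _ _ ENNReal.ofReal_ne_top
      _ = ENNReal.ofReal (2 * (1 + ‖y‖)) *
            ∫⁻ u, Set.indicator (Metric.closedBall (0 : E) Ry) g u ∂volume := by
          congr 1
          exact (measurePreserving_sub_right (volume : Measure E) y).lintegral_comp
            (hgmeas.indicator measurableSet_closedBall)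
      _ = ENNReal.ofReal (2 * (1 + ‖y‖)) *
            ∫⁻ u in Metric.closedBall (0 : E) Ry, g u ∂volume := by
          rw [lintegral_indicator measurableSet_closedBall]
      _ ≤ ENNReal.ofReal (2 * (1 + ‖y‖)) * (ENNReal.ofReal Ry * K) := by
          gcongr
          exact aux_ball_lintegral n hn Ry hRynn
      _ = ENNReal.ofReal (2 * (1 + ‖y‖) * Ry) * K := by
          rw [← mul_assoc, ← ENNReal.ofReal_mul (by positivity)]
      _ ≤ ENNReal.ofReal 6 * K := by
          gcongr
          calc 2 * (1 + ‖y‖) * Ry ≤ 2 * (1 + ‖y‖) * (3 / (1 + ‖y‖)) :=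
                mul_le_mul_of_nonneg_left (min_le_right _ _) (by positivity)
            _ = 6 := by field_simp; ring
            _ ≤ 6 := le_refl _
end

section
/- Let n ≥ 1 and 1 ≤ p < ∞. The operator L defined by L(g)(x) = ∫_{ℝⁿ} (1 + |x|) |x − y|^{1−n} χ_N(x,y) g(y) dy is bounded from L^p(ℝⁿ, dx) into itself: there exists C > 0 such that ‖L(g)‖_{L^p(ℝⁿ,dx)} ≤ C ‖g‖_{L^p(ℝⁿ,dx)} for every g ∈ L^p(ℝⁿ, dx), g ≥ 0. -/
open MeasureTheory Real
open scoped ENNReal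

lemma annuli (n : ℕ) (hn : 1 ≤ n) {r : ℝ} (hr : 0 < r) :
    ∫⁻ z : EuclideanSpace ℝ (Fin n),
      (Metric.closedBall (0 : EuclideanSpace ℝ (Fin n)) r).indicator
        (fun z => ENNReal.ofReal (‖z‖ ^ ((1:ℝ) - n))) z ∂volume
      ≤ ENNReal.ofReal (2 ^ (n+1) * r) *
          volume (Metric.ball (0 : EuclideanSpace ℝ (Fin n)) 1) := by
  classical
  set E := EuclideanSpace ℝ (Fin n)
  set ωB := volume (Metric.ball (0 : E) 1) with hωB
  set f : E → ℝ≥0∞ := fun z => ENNReal.ofReal (‖z‖ ^ ((1:ℝ) - n)) with hf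
  rw [lintegral_indicator (measurableSet_closedBall)]
  set A : ℕ → Set E := fun k => {z : E | ‖z‖ ∈ Set.Ioc (r / 2 ^ (k+1)) (r / 2 ^ k)} with hA
  have hsub : Metric.closedBall (0 : E) r ⊆ {0} ∪ ⋃ k, A k := by
    intro z hz
    rcases eq_or_ne z 0 with h0 | h0
    · exact Or.inl h0
    · refine Or.inr (Set.mem_iUnion.2 ?_)
      have hz' : ‖z‖ ≤ r := by simpa [mem_closedBall_zero_iff] using hz
      have hzpos : 0 < ‖z‖ := norm_pos_iff.mpr h0
      have hex : ∃ k : ℕ, r / 2 ^ (k+1) < ‖z‖ := by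
        obtain ⟨m, hm⟩ := exists_pow_lt_of_lt_one (div_pos hzpos hr) (by norm_num : (1:ℝ)/2 < 1)
        refine ⟨m, ?_⟩
        have h2 : r * (1/2)^m < r * (‖z‖ / r) := mul_lt_mul_of_pos_left hm hr
        rw [mul_div_cancel₀ _ hr.ne'] at h2
        calc r / 2 ^ (m+1) < r / 2 ^ m := by
              apply div_lt_div_of_pos_left hr (by positivity)
              exact pow_lt_pow_right₀ (by norm_num) (Nat.lt_succ_self m)
          _ = r * (1/2)^m := by rw [div_pow, one_pow]; ring
          _ < ‖z‖ := h2
      refine ⟨Nat.find hex, Nat.find_spec hex, ?_⟩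
      rcases Nat.eq_zero_or_pos (Nat.find hex) with h | h
      · simpa [h] using hz'
      · have hmin := Nat.find_min hex (m := Nat.find hex - 1) (by omega)
        push_neg at hmin
        have heq : Nat.find hex - 1 + 1 = Nat.find hex := by omega
        rwa [heq] at hmin
  calc ∫⁻ z in Metric.closedBall (0:E) r, f z
      ≤ ∫⁻ z in ({0} ∪ ⋃ k, A k : Set E), f z := lintegral_mono_set hsub
    _ ≤ (∫⁻ z in ({0} : Set E), f z) + ∫⁻ z in ⋃ k, A k, f z :=
        le_trans (lintegral_mono' (Measure.restrict_union_le _ _) le_rfl)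
          (lintegral_add_measure _ _ _).le
    _ = ∫⁻ z in ⋃ k, A k, f z := by
        have h0 : volume ({0} : Set E) = 0 := by
          rw [show ({0} : Set E) = Metric.closedBall (0:E) 0 from (Metric.closedBall_zero).symm,
            Measure.addHaar_closedBall volume (0:E) le_rfl, finrank_euclideanSpace_fin,
            zero_pow (by omega : n ≠ 0)]
          simp
        have hz0 : ∫⁻ z in ({0} : Set E), f z = 0 := setLIntegral_measure_zero _ _ h0
        rw [hz0, zero_add]
    _ ≤ ∑' k, ∫⁻ z in A k, f z := lintegral_iUnion_le _ _
    _ ≤ ∑' k, ENNReal.ofReal (2^n * r) * ((2:ℝ≥0∞)⁻¹ ^ k * ωB) := by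
        refine ENNReal.tsum_le_tsum fun k => ?_
        have hpos : (0:ℝ) < r / 2 ^ (k+1) := by positivity
        have step1 : ∫⁻ z in A k, f z
            ≤ ENNReal.ofReal ((r / 2^(k+1)) ^ ((1:ℝ) - n)) * volume (A k) := by
          rw [← setLIntegral_const]
          refine setLIntegral_mono (by measurability) fun z hz => ?_
          refine ENNReal.ofReal_le_ofReal
            (rpow_le_rpow_of_nonpos hpos hz.1.le ?_)
          simp only [sub_nonpos]
          exact_mod_cast hn
        have step2 : volume (A k) ≤ ENNReal.ofReal ((r / 2^k) ^ n) * ωB := by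
          calc volume (A k) ≤ volume (Metric.closedBall (0:E) (r / 2^k)) := by
                apply measure_mono
                intro z hz
                rw [mem_closedBall_zero_iff]
                exact hz.2
            _ = ENNReal.ofReal ((r / 2^k) ^ n) * ωB := by
                rw [Measure.addHaar_closedBall volume (0:E) (by positivity : (0:ℝ) ≤ r / 2^k),
                  finrank_euclideanSpace_fin]
        have hq : ENNReal.ofReal ((2:ℝ)⁻¹) = (2:ℝ≥0∞)⁻¹ := by
          rw [ENNReal.ofReal_inv_of_pos (by norm_num)]
          norm_num
        calc ∫⁻ z in A k, f z
            ≤ ENNReal.ofReal ((r / 2^(k+1)) ^ ((1:ℝ) - n)) * (ENNReal.ofReal ((r / 2^k) ^ n) * ωB) :=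
              le_trans step1 (mul_le_mul_right step2 _)
          _ = ENNReal.ofReal ((r / 2^(k+1)) ^ ((1:ℝ) - n) * (r / 2^k) ^ n) * ωB := by
              rw [← mul_assoc, ← ENNReal.ofReal_mul (by positivity)]
          _ ≤ ENNReal.ofReal (2^n * r) * ((2:ℝ≥0∞)⁻¹ ^ k * ωB) := by
              have key : (r / 2^(k+1)) ^ ((1:ℝ) - n) * (r / 2^k) ^ n
                  = 2^n * r * ((2:ℝ)⁻¹)^(k+1) := by
                set a : ℝ := r / 2^(k+1) with ha
                have ha2 : r / 2^k = 2 * a := by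
                  rw [ha]; field_simp; ring
                rw [ha2, mul_pow, mul_comm (a ^ ((1:ℝ)-n)), mul_assoc,
                  ← Real.rpow_natCast a n, ← Real.rpow_add hpos]
                have h1n : (n:ℝ) + ((1:ℝ) - n) = 1 := by ring
                rw [h1n, Real.rpow_one, ha]
                field_simp
                try ring
                rw [← mul_pow]; norm_num
              rw [key, ← mul_assoc]
              refine mul_le_mul' ?_ le_rfl
              calc ENNReal.ofReal (2^n * r * ((2:ℝ)⁻¹)^(k+1))
                  ≤ ENNReal.ofReal (2^n * r * ((2:ℝ)⁻¹)^k) := by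
                    refine ENNReal.ofReal_le_ofReal ?_
                    apply mul_le_mul_of_nonneg_left _ (by positivity)
                    exact pow_le_pow_of_le_one (by norm_num) (by norm_num) (Nat.le_succ k)
                _ = ENNReal.ofReal (2^n * r) * (2:ℝ≥0∞)⁻¹ ^ k := by
                    rw [ENNReal.ofReal_mul (by positivity), ENNReal.ofReal_pow (by norm_num), hq]
    _ = ENNReal.ofReal (2^n * r) * (2 * ωB) := by
        rw [ENNReal.tsum_mul_left, ENNReal.tsum_mul_right, ENNReal.tsum_geometric]
        rw [ENNReal.one_sub_inv_two, inv_inv]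
    _ = ENNReal.ofReal (2 ^ (n+1) * r) * ωB := by
        rw [← mul_assoc, mul_comm (ENNReal.ofReal _) 2, ← ENNReal.ofReal_ofNat 2,
          ← ENNReal.ofReal_mul (by norm_num)]
        congr 2
        ring


lemma meas_ind (n : ℕ) (ρ : ℝ) :
    Measurable (fun w : EuclideanSpace ℝ (Fin n) =>
      (Metric.closedBall (0 : EuclideanSpace ℝ (Fin n)) ρ).indicator
        (fun z => ENNReal.ofReal (‖z‖ ^ ((1:ℝ) - n))) w) := by
  apply Measurable.indicator _ measurableSet_closedBall
  fun_prop

lemma lint_bound (n : ℕ) (hn : 1 ≤ n) {c ρ : ℝ} (hc : 0 ≤ c) (hρ : 0 < ρ) (h4 : c * ρ ≤ 4)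
    (K : EuclideanSpace ℝ (Fin n) → ℝ≥0∞) (T : EuclideanSpace ℝ (Fin n) → EuclideanSpace ℝ (Fin n))
    (hT : MeasurePreserving T volume volume)
    (hK : ∀ z, K z ≤ ENNReal.ofReal c *
      (Metric.closedBall (0 : EuclideanSpace ℝ (Fin n)) ρ).indicator
        (fun w => ENNReal.ofReal (‖w‖ ^ ((1:ℝ) - n))) (T z)) :
    ∫⁻ z, K z ∂volume ≤ ENNReal.ofReal (2 ^ (n + 3)) *
      volume (Metric.ball (0 : EuclideanSpace ℝ (Fin n)) 1) := by
  set g : EuclideanSpace ℝ (Fin n) → ℝ≥0∞ := fun w =>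
    (Metric.closedBall (0 : EuclideanSpace ℝ (Fin n)) ρ).indicator (fun z => ENNReal.ofReal (‖z‖ ^ ((1:ℝ) - n))) w with hg
  calc ∫⁻ z, K z ∂volume ≤ ∫⁻ z, ENNReal.ofReal c * g (T z) ∂volume := lintegral_mono hK
    _ = ENNReal.ofReal c * ∫⁻ z, g (T z) ∂volume :=
        lintegral_const_mul _ ((meas_ind n ρ).comp hT.measurable)
    _ = ENNReal.ofReal c * ∫⁻ w, g w ∂volume := by rw [hT.lintegral_comp (meas_ind n ρ)]
    _ ≤ ENNReal.ofReal c * (ENNReal.ofReal (2 ^ (n+1) * ρ) *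
          volume (Metric.ball (0 : EuclideanSpace ℝ (Fin n)) 1)) := mul_le_mul_right (annuli n hn hρ) _
    _ ≤ ENNReal.ofReal (2 ^ (n + 3)) * volume (Metric.ball (0 : EuclideanSpace ℝ (Fin n)) 1) := by
        rw [← mul_assoc, ← ENNReal.ofReal_mul hc]
        refine mul_le_mul' (ENNReal.ofReal_le_ofReal ?_) le_rfl
        calc c * (2 ^ (n+1) * ρ) = 2 ^ (n+1) * (c * ρ) := by ring
          _ ≤ 2 ^ (n+1) * 4 := by nlinarith [h4, pow_pos (by norm_num : (0:ℝ) < 2) (n+1)]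
          _ = 2 ^ (n+3) := by ring


lemma schur {α : Type*} [MeasurableSpace α] {μ : Measure α} [SigmaFinite μ]
    (K : α → α → ℝ≥0∞) (hK : Measurable (Function.uncurry K))
    (hKtop : ∀ x y, K x y ≠ ∞)
    {p : ℝ} (hp : 1 ≤ p) {A : ℝ≥0∞} (hA0 : A ≠ 0) (hAt : A ≠ ∞)
    (h1 : ∀ x, ∫⁻ y, K x y ∂μ ≤ A) (h2 : ∀ y, ∫⁻ x, K x y ∂μ ≤ A)
    (g : α → ℝ≥0∞) (hg : Measurable g) :
    (∫⁻ x, (∫⁻ y, K x y * g y ∂μ) ^ p ∂μ) ^ (1/p) ≤ A * (∫⁻ y, g y ^ p ∂μ) ^ (1/p) := by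
  have hp0 : (0:ℝ) < p := lt_of_lt_of_le one_pos hp
  have hgp : Measurable fun y => g y ^ p := hg.pow_const p
  -- pointwise Hölder
  have point : ∀ x, (∫⁻ y, K x y * g y ∂μ) ^ p ≤ A ^ (p - 1) * ∫⁻ y, K x y * g y ^ p ∂μ := by
    intro x
    have hKx : Measurable (K x) := hK.comp measurable_prodMk_left
    rcases eq_or_lt_of_le hp with hpe | hlt
    · rw [← hpe]
      simp [ENNReal.rpow_one]
    · set q : ℝ := p / (p - 1) with hq
      have hpq : p.HolderConjugate q := (Real.holderConjugate_iff_eq_conjExponent hlt).mpr rfl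
      have hq0 : (0:ℝ) < q := hpq.symm.pos
      have key : (fun y => K x y * g y)
          = fun y => ((K x y) ^ (1/p) * g y) * (K x y) ^ (1/q) := by
        funext y
        rcases eq_or_ne (K x y) 0 with h0 | h0
        · simp [h0, ENNReal.zero_rpow_of_pos (by positivity : (0:ℝ) < 1/p),
            ENNReal.zero_rpow_of_pos (by positivity : (0:ℝ) < 1/q)]
          exact Or.inl (Or.inl hp0)
        · rw [mul_assoc, mul_comm (g y), ← mul_assoc,
            ← ENNReal.rpow_add _ _ h0 (hKtop x y), one_div, one_div,
            hpq.inv_add_inv_eq_one, ENNReal.rpow_one]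
      have holder : ∫⁻ y, K x y * g y ∂μ
          ≤ (∫⁻ y, K x y * g y ^ p ∂μ) ^ (1/p) * A ^ (1/q) := by
        rw [key]
        have hH := ENNReal.lintegral_mul_le_Lp_mul_Lq μ hpq
          (f := fun y => (K x y) ^ (1/p) * g y) (g := fun y => (K x y) ^ (1/q))
          ((hKx.pow_const _).mul hg).aemeasurable (hKx.pow_const _).aemeasurable
        refine le_trans (le_of_eq (by rfl)) (le_trans hH ?_)
        have e1 : ∀ y, ((K x y) ^ (1/p) * g y) ^ p = K x y * g y ^ p := by
          intro y
          rw [ENNReal.mul_rpow_of_nonneg _ _ hp0.le, ← ENNReal.rpow_mul,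
            one_div, inv_mul_cancel₀ hp0.ne', ENNReal.rpow_one]
        have e2 : ∀ y, ((K x y) ^ (1/q)) ^ q = K x y := by
          intro y
          rw [← ENNReal.rpow_mul, one_div, inv_mul_cancel₀ hq0.ne', ENNReal.rpow_one]
        simp_rw [e1, e2]
        exact mul_le_mul' le_rfl (ENNReal.rpow_le_rpow (h1 x) (by positivity))
      calc (∫⁻ y, K x y * g y ∂μ) ^ p
          ≤ ((∫⁻ y, K x y * g y ^ p ∂μ) ^ (1/p) * A ^ (1/q)) ^ p :=
            ENNReal.rpow_le_rpow holder hp0.le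
        _ = (∫⁻ y, K x y * g y ^ p ∂μ) * A ^ (p - 1) := by
            rw [ENNReal.mul_rpow_of_nonneg _ _ hp0.le, ← ENNReal.rpow_mul,
              ← ENNReal.rpow_mul, one_div, inv_mul_cancel₀ hp0.ne', ENNReal.rpow_one]
            congr 2
            rw [one_div, ← div_eq_inv_mul, hpq.div_conj_eq_sub_one]
        _ = A ^ (p - 1) * ∫⁻ y, K x y * g y ^ p ∂μ := mul_comm _ _
  -- integrate
  have humeas : Measurable (Function.uncurry fun x y => K x y * g y ^ p) :=
    hK.mul (hgp.comp measurable_snd)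
  have main : ∫⁻ x, (∫⁻ y, K x y * g y ∂μ) ^ p ∂μ ≤ A ^ p * ∫⁻ y, g y ^ p ∂μ := by
    calc ∫⁻ x, (∫⁻ y, K x y * g y ∂μ) ^ p ∂μ
        ≤ ∫⁻ x, A ^ (p - 1) * ∫⁻ y, K x y * g y ^ p ∂μ ∂μ := lintegral_mono point
      _ = A ^ (p - 1) * ∫⁻ x, ∫⁻ y, K x y * g y ^ p ∂μ ∂μ :=
          lintegral_const_mul _ humeas.lintegral_prod_right'
      _ = A ^ (p - 1) * ∫⁻ y, ∫⁻ x, K x y * g y ^ p ∂μ ∂μ := by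
          rw [lintegral_lintegral_swap humeas.aemeasurable]
      _ = A ^ (p - 1) * ∫⁻ y, (∫⁻ x, K x y ∂μ) * g y ^ p ∂μ := by
          congr 1
          refine lintegral_congr fun y => ?_
          exact lintegral_mul_const _ (show Measurable fun x => K x y from
            hK.comp measurable_prodMk_right)
      _ ≤ A ^ (p - 1) * ∫⁻ y, A * g y ^ p ∂μ := by
          refine mul_le_mul' le_rfl (lintegral_mono fun y => ?_)
          exact mul_le_mul_left (h2 y) _
      _ = A ^ (p - 1) * (A * ∫⁻ y, g y ^ p ∂μ) := by rw [lintegral_const_mul _ hgp]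
      _ = A ^ p * ∫⁻ y, g y ^ p ∂μ := by
          rw [← mul_assoc]
          congr 1
          nth_rewrite 2 [← ENNReal.rpow_one A]
          rw [← ENNReal.rpow_add _ _ hA0 hAt]
          norm_num
  calc (∫⁻ x, (∫⁻ y, K x y * g y ∂μ) ^ p ∂μ) ^ (1/p)
      ≤ (A ^ p * ∫⁻ y, g y ^ p ∂μ) ^ (1/p) := ENNReal.rpow_le_rpow main (by positivity)
    _ = A * (∫⁻ y, g y ^ p ∂μ) ^ (1/p) := by
        rw [ENNReal.mul_rpow_of_nonneg _ _ (by positivity), ← ENNReal.rpow_mul,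
          one_div, mul_inv_cancel₀ hp0.ne', ENNReal.rpow_one]

/-- For `1 ≤ p < ∞`, the operator
`L(g)(x) = ∫ (1+|x|)|x-y|^{1-n} χ_N(x,y) g(y) dy` is bounded on `L^p(ℝⁿ, dx)`
(for nonnegative `g`). -/
theorem stmt9 (n : ℕ) (hn : 1 ≤ n) (p : ℝ) (hp : 1 ≤ p) :
    ∃ C : ℝ, 0 < C ∧ ∀ g : EuclideanSpace ℝ (Fin n) → ℝ≥0∞, Measurable g →
      (∫⁻ x, (∫⁻ y, Set.indicator (localN n)
          (fun q => ENNReal.ofReal ((1 + ‖q.1‖) * ‖q.1 - q.2‖ ^ ((1 : ℝ) - n))) (x, y)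
          * g y ∂volume) ^ p ∂volume) ^ (1 / p)
        ≤ ENNReal.ofReal C * (∫⁻ y, g y ^ p ∂volume) ^ (1 / p) := by
  set F : EuclideanSpace ℝ (Fin n) × EuclideanSpace ℝ (Fin n) → ℝ≥0∞ :=
    fun q => ENNReal.ofReal ((1 + ‖q.1‖) * ‖q.1 - q.2‖ ^ ((1 : ℝ) - n)) with hF
  set K : EuclideanSpace ℝ (Fin n) → EuclideanSpace ℝ (Fin n) → ℝ≥0∞ :=
    fun x y => Set.indicator (localN n) F (x, y) with hK
  set A : ℝ≥0∞ := ENNReal.ofReal (2 ^ (n + 3)) *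
    volume (Metric.ball (0 : EuclideanSpace ℝ (Fin n)) 1) with hA
  have hA0 : A ≠ 0 := by
    refine mul_ne_zero ?_ ?_
    · simp only [ne_eq, ENNReal.ofReal_eq_zero, not_le]
      positivity
    · exact (Metric.measure_ball_pos volume 0 one_pos).ne'
  have hAt : A ≠ ∞ := ENNReal.mul_ne_top ENNReal.ofReal_ne_top measure_ball_lt_top.ne
  have hNmeas : MeasurableSet (localN n) := by
    have h1 : Continuous fun q : EuclideanSpace ℝ (Fin n) × EuclideanSpace ℝ (Fin n) =>
      ‖q.1 - q.2‖ := (continuous_fst.sub continuous_snd).norm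
    have h2 : Continuous fun q : EuclideanSpace ℝ (Fin n) × EuclideanSpace ℝ (Fin n) =>
      ‖q.1 - q.2‖ * ‖q.1‖ := h1.mul continuous_fst.norm
    exact ((isClosed_le h1 continuous_const).inter (isClosed_le h2 continuous_const)).measurableSet
  have hFmeas : Measurable F := by rw [hF]; fun_prop
  have hKmeas : Measurable (Function.uncurry K) := by
    have : Function.uncurry K = (localN n).indicator F := by
      funext q
      simp [Function.uncurry, hK]
    rw [this]
    exact hFmeas.indicator hNmeas
  have hKtop : ∀ x y, K x y ≠ ∞ := by
    intro x y
    rw [hK]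
    simp only
    by_cases h : (x, y) ∈ localN n
    · rw [Set.indicator_of_mem h]; simp [hF]
    · rw [Set.indicator_of_notMem h]; simp
  have hb1 : ∀ x, ∫⁻ y, K x y ∂volume ≤ A := by
    intro x
    have hmax : (0:ℝ) < max 1 ‖x‖ := lt_of_lt_of_le one_pos (le_max_left _ _)
    refine lint_bound n hn (c := 1 + ‖x‖) (ρ := (max 1 ‖x‖)⁻¹) (by positivity)
      (by positivity) ?_ (K x) (fun y => x - y)
      (Measure.measurePreserving_sub_left volume x) ?_
    · rw [mul_inv_le_iff₀ hmax]
      have := le_max_left (1:ℝ) ‖x‖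
      have := le_max_right (1:ℝ) ‖x‖
      nlinarith
    · intro y
      by_cases h : (x, y) ∈ localN n
      · have hxy : ‖x - y‖ ≤ (max 1 ‖x‖)⁻¹ := by
          rw [← one_div]
          refine (le_div_iff₀ hmax).mpr ?_
          rcases max_cases (1:ℝ) ‖x‖ with ⟨he, _⟩ | ⟨he, _⟩ <;> rw [he]
          · simpa using h.1
          · exact h.2
        rw [hK]
        simp only
        rw [Set.indicator_of_mem h,
          Set.indicator_of_mem (by simpa [mem_closedBall_zero_iff] using hxy), hF]
        rw [← ENNReal.ofReal_mul (by positivity)]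
      · rw [hK]
        simp only
        rw [Set.indicator_of_notMem h]
        exact zero_le
  have hb2 : ∀ y, ∫⁻ x, K x y ∂volume ≤ A := by
    intro y
    have hmax : (0:ℝ) < max 1 (‖y‖ - 1) := lt_of_lt_of_le one_pos (le_max_left _ _)
    refine lint_bound n hn (c := 2 + ‖y‖) (ρ := (max 1 (‖y‖ - 1))⁻¹) (by positivity)
      (by positivity) ?_ (fun x => K x y) (fun x => x - y)
      (measurePreserving_sub_right volume y) ?_
    · rw [mul_inv_le_iff₀ hmax]
      rcases le_total (‖y‖ - 1) 1 with hc | hc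
      · rw [max_eq_left hc]
        have := norm_nonneg y
        nlinarith
      · rw [max_eq_right hc]
        nlinarith
    · intro x
      by_cases h : (x, y) ∈ localN n
      · have hxy1 : ‖x - y‖ ≤ 1 := h.1
        have hyx : ‖y‖ - 1 ≤ ‖x‖ := by
          have h1 := abs_norm_sub_norm_le x y
          have h2 : ‖y‖ - ‖x‖ ≤ ‖x - y‖ := by
            have := neg_abs_le (‖x‖ - ‖y‖)
            linarith [abs_norm_sub_norm_le x y]
          linarith
        have hxy : ‖x - y‖ ≤ (max 1 (‖y‖ - 1))⁻¹ := by
          rw [← one_div]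
          refine (le_div_iff₀ hmax).mpr ?_
          rcases max_cases (1:ℝ) (‖y‖ - 1) with ⟨he, _⟩ | ⟨he, hle⟩ <;> rw [he]
          · simpa using hxy1
          · calc ‖x - y‖ * (‖y‖ - 1) ≤ ‖x - y‖ * ‖x‖ :=
                mul_le_mul_of_nonneg_left hyx (norm_nonneg _)
              _ ≤ 1 := h.2
        have hx2 : 1 + ‖x‖ ≤ 2 + ‖y‖ := by
          have h2 : ‖x‖ - ‖y‖ ≤ ‖x - y‖ := le_trans (le_abs_self _) (abs_norm_sub_norm_le x y)
          linarith
        rw [hK]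
        simp only
        rw [Set.indicator_of_mem h,
          Set.indicator_of_mem (by simpa [mem_closedBall_zero_iff] using hxy), hF]
        rw [← ENNReal.ofReal_mul (by positivity)]
        refine ENNReal.ofReal_le_ofReal ?_
        have : (0:ℝ) ≤ ‖x - y‖ ^ ((1:ℝ) - n) := rpow_nonneg (norm_nonneg _) _
        nlinarith
      · rw [hK]
        simp only
        rw [Set.indicator_of_notMem h]
        exact zero_le
  refine ⟨A.toReal, ENNReal.toReal_pos hA0 hAt, fun g hg => ?_⟩
  have := schur K hKmeas hKtop hp hA0 hAt hb1 hb2 g hg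
  rwa [ENNReal.ofReal_toReal hAt]
end
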